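/- (Odd moment order bound.) Let a^{(N)}, b^{(N)} be sequences of real N×N arrays with a_{ij} = a_{ji}, b_{ij} = b_{ji}, ∑_{i,j} a_{ij} = ∑_{i,j} b_{ij} = 0, and ∑_{i,j,k} a_{ij} a_{ik} ≍ N^3 (max_{i,j} |a_{ij}|)^2, ∑_{i,j,k} b_{ij} b_{ik} ≍ N^3 (max_{i,j} |b_{ij}|)^2 as N → ∞. Let Γ_N(π) = ∑_{i,j} a_{ij} b_{π(i)π(j)} with π uniform over permutations of {1,…,N}, and write a_max = max_{i,j} |a_{ij}|, b_max = max_{i,j} |b_{ij}|. Then for every fixed nonnegative integer m, |E[Γ_N^{2m+1}]| = O( N^{3m+1} · a_max^{2m+1} · b_max^{2m+1} ) as N → ∞. -/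

import Mathlib

open MeasureTheory ProbabilityTheory Filter Finset Topology

/-- Generalized correlation coefficient `Γ(π) = ∑_{i,j} a_{ij} b_{π(i)π(j)}`. -/
noncomputable def gammaStat (N : ℕ) (a b : Fin N → Fin N → ℝ) (π : Equiv.Perm (Fin N)) : ℝ :=
  ∑ i, ∑ j, a i j * b (π i) (π j)

/-- Expectation of a statistic of a uniformly random permutation of `{1,…,N}`. -/
noncomputable def permE (N : ℕ) (f : Equiv.Perm (Fin N) → ℝ) : ℝ :=
  (∑ π : Equiv.Perm (Fin N), f π) / (N.factorial : ℝ)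

/-- Law of a real statistic of a uniformly random permutation of `{1,…,N}`. -/
noncomputable def permLaw (N : ℕ) (f : Equiv.Perm (Fin N) → ℝ) : ProbabilityMeasure ℝ :=
  ⟨((PMF.uniformOfFintype (Equiv.Perm (Fin N))).map f).toMeasure, inferInstance⟩

/-- The standard normal distribution `N(0,1)` as a probability measure on `ℝ`. -/
noncomputable def stdGaussian : ProbabilityMeasure ℝ := ⟨gaussianReal 0 1, inferInstance⟩

/-- `x_N ≍ y_N` : there are constants `0 < c ≤ C` with `c y_N ≤ x_N ≤ C y_N` for all large `N`. -/
def AsympEquiv (x y : ℕ → ℝ) : Prop :=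
  ∃ c C : ℝ, 0 < c ∧ c ≤ C ∧ ∀ᶠ N in atTop, c * y N ≤ x N ∧ x N ≤ C * y N

/-- `max_{i,j} |a_{ij}|`. -/
noncomputable def arrMax (N : ℕ) (a : Fin N → Fin N → ℝ) : ℝ := ⨆ i, ⨆ j, |a i j|

set_option linter.unusedSectionVars false
set_option maxHeartbeats 1000000
namespace OddMoment

open Finset Function

variable {V : Type*} [DecidableEq V]

def glue (u : V) {β : Type*} (y : β) (v' : {x : V // x ≠ u} → β) (x : V) : β :=
  if h : x = u then y else v' ⟨x, h⟩

@[simp] lemma glue_self (u : V) {β : Type*} (y : β) (v' : {x : V // x ≠ u} → β) :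
    glue u y v' u = y := dif_pos rfl

lemma glue_ne (u : V) {β : Type*} (y : β) (v' : {x : V // x ≠ u} → β) {x : V} (h : x ≠ u) :
    glue u y v' x = v' ⟨x, h⟩ := dif_neg h

@[simp] lemma glue_coe (u : V) {β : Type*} (y : β) (v' : {x : V // x ≠ u} → β)
    (x : {x : V // x ≠ u}) : glue u y v' (x : V) = v' x := by
  rw [glue_ne u y v' x.2]

-- multiset helpers
lemma multiset_sum_nat_eq_zero {γ : Type*} {s : Multiset γ} {f : γ → ℕ} :
    (s.map f).sum = 0 → ∀ e ∈ s, f e = 0 := by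
  induction s using Multiset.induction_on with
  | empty => simp
  | cons a t ih =>
    intro h e he
    simp only [Multiset.map_cons, Multiset.sum_cons] at h
    rcases Multiset.mem_cons.mp he with rfl | he'
    · omega
    · exact ih (by omega) e he'

lemma exists_cons_of_map_sum_one {γ : Type*} {s : Multiset γ} {f : γ → ℕ} :
    (s.map f).sum = 1 → ∃ e s₀, s = e ::ₘ s₀ ∧ f e = 1 ∧ (s₀.map f).sum = 0 := by
  induction s using Multiset.induction_on with
  | empty => simp
  | cons a t ih =>
    intro h
    simp only [Multiset.map_cons, Multiset.sum_cons] at h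
    by_cases ha : f a = 1
    · exact ⟨a, t, rfl, ha, by omega⟩
    · have hfa : f a = 0 := by omega
      obtain ⟨e, s₀, rfl, he, hs⟩ := ih (by omega)
      refine ⟨e, a ::ₘ s₀, Multiset.cons_swap a e s₀, he, ?_⟩
      simp [Multiset.sum_cons, hfa, hs]

lemma abs_multiset_prod_le {γ : Type*} (s : Multiset γ) (f : γ → ℝ) (α : ℝ) (hα : 0 ≤ α)
    (h : ∀ x ∈ s, |f x| ≤ α) : |(s.map f).prod| ≤ α ^ Multiset.card s := by
  induction s using Multiset.induction_on with
  | empty => simp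
  | cons a t ih =>
    simp only [Multiset.map_cons, Multiset.prod_cons, Multiset.card_cons, abs_mul, pow_succ]
    rw [mul_comm (α ^ Multiset.card t) α]
    exact mul_le_mul (h a (Multiset.mem_cons_self a t))
      (ih fun x hx => h x (Multiset.mem_cons_of_mem hx)) (abs_nonneg _) hα

-- pattern weight and sum
noncomputable def patWeight (N : ℕ) (c : Fin N → Fin N → ℝ) (w : Fin N → ℝ)
    (E : Multiset (V × V)) (m : Multiset V) (v : V → Fin N) : ℝ :=
  (E.map fun e => c (v e.1) (v e.2)).prod * (m.map fun x => w (v x)).prod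

lemma patWeight_cons_edge (N : ℕ) (c : Fin N → Fin N → ℝ) (w : Fin N → ℝ)
    (e : V × V) (E : Multiset (V × V)) (m : Multiset V) (v : V → Fin N) :
    patWeight N c w (e ::ₘ E) m v = c (v e.1) (v e.2) * patWeight N c w E m v := by
  simp [patWeight, Multiset.map_cons, Multiset.prod_cons, mul_assoc]

lemma patWeight_cons_mark (N : ℕ) (c : Fin N → Fin N → ℝ) (w : Fin N → ℝ)
    (E : Multiset (V × V)) (x : V) (m : Multiset V) (v : V → Fin N) :
    patWeight N c w E (x ::ₘ m) v = w (v x) * patWeight N c w E m v := by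
  simp [patWeight, Multiset.map_cons, Multiset.prod_cons]; ring

noncomputable def injSum (V : Type*) [DecidableEq V] [Fintype V] (N : ℕ)
    (c : Fin N → Fin N → ℝ) (w : Fin N → ℝ)
    (E : Multiset (V × V)) (m : Multiset V) : ℝ :=
  ∑ v : V → Fin N, if Injective v then patWeight N c w E m v else 0

lemma abs_patWeight_le {N : ℕ} (c : Fin N → Fin N → ℝ) (w : Fin N → ℝ)
    (E : Multiset (V × V)) (m : Multiset V) (v : V → Fin N) {α W : ℝ}
    (hα : 0 ≤ α) (hW : 0 ≤ W) (hc : ∀ i j, |c i j| ≤ α) (hw : ∀ i, |w i| ≤ W) :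
    |patWeight N c w E m v| ≤ α ^ Multiset.card E * W ^ Multiset.card m := by
  rw [patWeight, abs_mul]
  exact mul_le_mul (abs_multiset_prod_le _ _ _ hα fun x _ => hc _ _)
    (abs_multiset_prod_le _ _ _ hW fun x _ => hw _) (abs_nonneg _) (by positivity)

-- occurrences
def occ (E : Multiset (V × V)) (m : Multiset V) (u : V) : ℕ :=
  (E.map fun e => (if e.1 = u then 1 else 0) + (if e.2 = u then 1 else 0)).sum
    + (m.map fun x => if x = u then (1 : ℕ) else 0).sum

lemma occ_cons_edge (e : V × V) (E : Multiset (V × V)) (m : Multiset V) (u : V) :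
    occ (e ::ₘ E) m u
      = ((if e.1 = u then 1 else 0) + (if e.2 = u then 1 else 0)) + occ E m u := by
  simp [occ, Multiset.map_cons, Multiset.sum_cons]; ring

lemma occ_cons_mark (E : Multiset (V × V)) (x : V) (m : Multiset V) (u : V) :
    occ E (x ::ₘ m) u = (if x = u then 1 else 0) + occ E m u := by
  simp [occ, Multiset.map_cons, Multiset.sum_cons]; ring

lemma occ_cons_edge_eq_zero (e : V × V) (E : Multiset (V × V)) (m : Multiset V) (t : V) :
    occ (e ::ₘ E) m t = 0 ↔ (e.1 ≠ t ∧ e.2 ≠ t ∧ occ E m t = 0) := by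
  rw [occ_cons_edge]
  by_cases h1 : e.1 = t <;> by_cases h2 : e.2 = t <;> simp [h1, h2]

lemma occ_cons_mark_eq_zero (E : Multiset (V × V)) (x : V) (m : Multiset V) (t : V) :
    occ E (x ::ₘ m) t = 0 ↔ (x ≠ t ∧ occ E m t = 0) := by
  rw [occ_cons_mark]
  by_cases h1 : x = t <;> simp [h1]

def isoCount [Fintype V] (E : Multiset (V × V)) (m : Multiset V) : ℕ :=
  (univ.filter fun u => occ E m u = 0).card

lemma sum_occ [Fintype V] (E : Multiset (V × V)) (m : Multiset V) :
    ∑ u : V, occ E m u = 2 * Multiset.card E + Multiset.card m := by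
  have swap : ∀ {γ : Type _} (s : Multiset γ) (f : V → γ → ℕ),
      ∑ u : V, (s.map (f u)).sum = (s.map fun e => ∑ u : V, f u e).sum := by
    intro γ s f
    induction s using Multiset.induction_on with
    | empty => simp
    | cons a t ih => simp [Multiset.map_cons, Multiset.sum_cons, Finset.sum_add_distrib, ih]
  unfold occ
  rw [Finset.sum_add_distrib, swap, swap]
  have h1 : (E.map fun e => ∑ u : V,
      ((if e.1 = u then 1 else 0) + (if e.2 = u then 1 else 0))).sum
      = (E.map fun _ => (2:ℕ)).sum := by
    congr 1
    apply Multiset.map_congr rfl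
    intro e _
    rw [Finset.sum_add_distrib]
    simp [Finset.sum_ite_eq univ]
  have h2 : (m.map fun x => ∑ u : V, (if x = u then (1:ℕ) else 0)).sum
      = (m.map fun _ => (1:ℕ)).sum := by
    congr 1
    apply Multiset.map_congr rfl
    intro x _
    simp [Finset.sum_ite_eq univ]
  rw [h1, h2]
  simp [Multiset.map_const', Multiset.sum_replicate, mul_comm]


def glueEquiv (u : V) (β : Type*) : (V → β) ≃ β × ({x : V // x ≠ u} → β) where
  toFun v := (v u, fun x => v x)
  invFun p := glue u p.1 p.2
  left_inv v := by
    funext x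
    by_cases h : x = u
    · subst h; simp [glue]
    · simp [glue, h]
  right_inv p := by
    refine Prod.ext ?_ ?_
    · simp
    · funext x; simp

lemma injective_glue_iff {u : V} {β : Type*} {y : β} {v' : {x : V // x ≠ u} → β} :
    Injective (glue u y v') ↔ Injective v' ∧ ∀ x, v' x ≠ y := by
  constructor
  · intro h
    refine ⟨fun x₁ x₂ hx => ?_, fun x hx => ?_⟩
    · apply Subtype.ext
      apply h (a₁ := (x₁ : V)) (a₂ := (x₂ : V))
      simpa using hx
    · have hxx : glue u y v' (x : V) = glue u y v' u := by simp [hx]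
      exact x.2 (h hxx)
  · rintro ⟨h1, h2⟩ x₁ x₂ hx
    by_cases e1 : x₁ = u <;> by_cases e2 : x₂ = u
    · rw [e1, e2]
    · exfalso; rw [e1] at hx; rw [glue_self, glue_ne u y v' e2] at hx; exact h2 _ hx.symm
    · exfalso; rw [e2] at hx; rw [glue_self, glue_ne u y v' e1] at hx; exact h2 _ hx
    · rw [glue_ne u y v' e1, glue_ne u y v' e2] at hx
      have := h1 hx
      simpa using congrArg Subtype.val this


-- restriction to the subtype avoiding u
def eRes (u : V) (E : Multiset (V × V)) (hE : ∀ e ∈ E, e.1 ≠ u ∧ e.2 ≠ u) :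
    Multiset ({x : V // x ≠ u} × {x : V // x ≠ u}) :=
  E.pmap (fun e h => (⟨e.1, h.1⟩, ⟨e.2, h.2⟩)) hE

def mRes (u : V) (m : Multiset V) (hm : ∀ x ∈ m, x ≠ u) : Multiset {x : V // x ≠ u} :=
  m.pmap (fun x h => ⟨x, h⟩) hm

@[simp] lemma card_eRes (u : V) (E : Multiset (V × V)) (hE) :
    Multiset.card (eRes u E hE) = Multiset.card E := Multiset.card_pmap _ _ _
@[simp] lemma card_mRes (u : V) (m : Multiset V) (hm) :
    Multiset.card (mRes u m hm) = Multiset.card m := Multiset.card_pmap _ _ _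

lemma patWeight_glue {N : ℕ} (u : V) (c : Fin N → Fin N → ℝ) (w : Fin N → ℝ)
    (E : Multiset (V × V)) (m : Multiset V) (hE) (hm)
    (y : Fin N) (v' : {x : V // x ≠ u} → Fin N) :
    patWeight N c w (eRes u E hE) (mRes u m hm) v' = patWeight N c w E m (glue u y v') := by
  unfold patWeight eRes mRes
  rw [Multiset.map_pmap, Multiset.map_pmap]
  congr 1
  · congr 1
    rw [← Multiset.pmap_eq_map _ (fun e => c (glue u y v' e.1) (glue u y v' e.2)) E hE]
    apply Multiset.pmap_congr E
    intro e he h1 h2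
    rw [glue_ne u y v' h1.1, glue_ne u y v' h1.2]
  · congr 1
    rw [← Multiset.pmap_eq_map _ (fun x => w (glue u y v' x)) m hm]
    apply Multiset.pmap_congr m
    intro x hx h1 h2
    rw [glue_ne u y v' h1]

lemma occ_eRes (u : V) (E : Multiset (V × V)) (m : Multiset V) (hE) (hm)
    (x : {x : V // x ≠ u}) :
    occ (eRes u E hE) (mRes u m hm) x = occ E m (x : V) := by
  unfold occ eRes mRes
  rw [Multiset.map_pmap, Multiset.map_pmap]
  congr 1
  · congr 1
    rw [← Multiset.pmap_eq_map _
      (fun e => ((if e.1 = (x : V) then 1 else 0) + (if e.2 = (x:V) then 1 else 0))) E hE]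
    apply Multiset.pmap_congr E
    intro e he h1 h2
    congr 1 <;> simp [Subtype.ext_iff]
  · congr 1
    rw [← Multiset.pmap_eq_map _ (fun t => if t = (x : V) then (1:ℕ) else 0) m hm]
    apply Multiset.pmap_congr m
    intro t ht h1 h2
    simp [Subtype.ext_iff]

lemma isoCount_coe_le [Fintype V] (u : V)
    (E' : Multiset ({x : V // x ≠ u} × {x : V // x ≠ u})) (m' : Multiset {x : V // x ≠ u})
    (E : Multiset (V × V)) (m : Multiset V)
    (h : ∀ x : {x : V // x ≠ u}, occ E' m' x = 0 → occ E m (x : V) = 0) :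
    isoCount E' m' ≤ isoCount E m := by
  unfold isoCount
  apply Finset.card_le_card_of_injOn (Subtype.val : {x : V // x ≠ u} → V)
  · intro x hx
    simp only [Finset.mem_coe, mem_filter, mem_univ, true_and] at *
    exact h x hx
  · exact fun a _ b _ hab => Subtype.ext hab

lemma isoCount_succ_le [Fintype V] (u : V)
    (E' : Multiset ({x : V // x ≠ u} × {x : V // x ≠ u})) (m' : Multiset {x : V // x ≠ u})
    (E : Multiset (V × V)) (m : Multiset V) (hu : occ E m u = 0)
    (h : ∀ x : {x : V // x ≠ u}, occ E' m' x = 0 → occ E m (x : V) = 0) :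
    isoCount E' m' + 1 ≤ isoCount E m := by
  classical
  set S : Finset V := (univ.filter fun x : {x : V // x ≠ u} => occ E' m' x = 0).image
      (Subtype.val : {x : V // x ≠ u} → V) with hS
  have hsub : insert u S ⊆ univ.filter fun t => occ E m t = 0 := by
    intro t ht
    rcases Finset.mem_insert.mp ht with rfl | ht
    · simp [hu]
    · obtain ⟨x, hx, rfl⟩ := Finset.mem_image.mp ht
      simp only [mem_filter, mem_univ, true_and] at *
      exact h x hx
  have hnotmem : u ∉ S := by
    simp only [hS, Finset.mem_image]
    rintro ⟨x, _, hx⟩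
    exact x.2 hx
  have hcard : S.card = isoCount E' m' := by
    rw [hS, Finset.card_image_of_injective _ (fun a b hab => Subtype.ext hab)]
    rfl
  calc isoCount E' m' + 1 = (insert u S).card := by
        rw [Finset.card_insert_of_notMem hnotmem, hcard]
    _ ≤ isoCount E m := Finset.card_le_card hsub



-- splitting the injection-sum at a vertex u
lemma avoid_filter_eq {N : ℕ} {V' : Type*} [Fintype V'] [DecidableEq V'] (v' : V' → Fin N) :
    (univ.filter fun y : Fin N => ∀ x, v' x ≠ y) = (univ.image v')ᶜ := by
  ext y
  simp only [mem_filter, mem_univ, true_and, Finset.mem_compl, Finset.mem_image]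
  constructor
  · intro h
    push_neg
    exact h
  · intro h
    push_neg at h
    exact h

lemma card_avoid {N : ℕ} {V' : Type*} [Fintype V'] [DecidableEq V'] {v' : V' → Fin N}
    (hv : Injective v') :
    (univ.filter fun y : Fin N => ∀ x, v' x ≠ y).card = N - Fintype.card V' := by
  rw [avoid_filter_eq, Finset.card_compl, Finset.card_image_of_injective _ hv]
  simp

lemma injSum_split {N : ℕ} [Fintype V] (u : V) (F : (V → Fin N) → ℝ) :
    (∑ v : V → Fin N, if Injective v then F v else 0)
      = ∑ v' : {x : V // x ≠ u} → Fin N, (if Injective v' then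
          ∑ y : Fin N, (if ∀ x, v' x ≠ y then F (glue u y v') else 0) else 0) := by
  classical
  rw [← Equiv.sum_comp (glueEquiv u (Fin N)).symm
    (fun v => if Injective v then F v else 0)]
  rw [Fintype.sum_prod_type]
  rw [Finset.sum_comm]
  apply Finset.sum_congr rfl
  intro v' _
  by_cases hv : Injective v'
  · rw [if_pos hv]
    apply Finset.sum_congr rfl
    intro y _
    have hgl : (glueEquiv u (Fin N)).symm (y, v') = glue u y v' := rfl
    rw [hgl]
    by_cases hy : ∀ x, v' x ≠ y
    · rw [if_pos (injective_glue_iff.mpr ⟨hv, hy⟩), if_pos hy]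
    · rw [if_neg (fun hI => hy (injective_glue_iff.mp hI).2), if_neg hy]
  · rw [if_neg hv]
    apply Finset.sum_eq_zero
    intro y _
    have hgl : (glueEquiv u (Fin N)).symm (y, v') = glue u y v' := rfl
    rw [hgl]
    exact if_neg (fun hI => hv (injective_glue_iff.mp hI).1)

-- the isolated-vertex identity
lemma injSum_isolated {N : ℕ} [Fintype V] (u : V) (c : Fin N → Fin N → ℝ) (w : Fin N → ℝ)
    (E : Multiset (V × V)) (m : Multiset V) (hE : ∀ e ∈ E, e.1 ≠ u ∧ e.2 ≠ u)
    (hm : ∀ x ∈ m, x ≠ u) :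
    injSum V N c w E m
      = ((N - Fintype.card {x : V // x ≠ u} : ℕ) : ℝ)
          * injSum {x : V // x ≠ u} N c w (eRes u E hE) (mRes u m hm) := by
  rw [injSum, injSum_split u, injSum, Finset.mul_sum]
  apply Finset.sum_congr rfl
  intro v' _
  by_cases hv : Injective v'
  · rw [if_pos hv, if_pos hv]
    have h1 : ∀ y ∈ (univ : Finset (Fin N)),
        (if (∀ x, v' x ≠ y) then patWeight N c w E m (glue u y v') else 0)
        = (if (∀ x, v' x ≠ y) then patWeight N c w (eRes u E hE) (mRes u m hm) v' else 0) := by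
      intro y _
      by_cases h : ∀ x, v' x ≠ y
      · rw [if_pos h, if_pos h, patWeight_glue u c w E m hE hm y v']
      · rw [if_neg h, if_neg h]
    rw [Finset.sum_congr rfl h1, ← Finset.sum_filter, Finset.sum_const, card_avoid hv,
      nsmul_eq_mul]
  · rw [if_neg hv, if_neg hv, mul_zero]

-- sum over the complement of the image
lemma sum_compl_image {N : ℕ} {V' : Type*} [Fintype V'] [DecidableEq V']
    {v' : V' → Fin N} (hv : Injective v') (f : Fin N → ℝ) :
    ∑ y ∈ (univ.image v')ᶜ, f y = (∑ y : Fin N, f y) - ∑ x : V', f (v' x) := by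
  have h := Finset.sum_add_sum_compl (univ.image v') f
  have h2 : ∑ y ∈ univ.image v', f y = ∑ x : V', f (v' x) :=
    Finset.sum_image (fun x _ y _ hxy => hv hxy)
  linarith

-- edge prune, left orientation
lemma injSum_prune_edgeL {N : ℕ} [Fintype V] (u ω : V) (hω : ω ≠ u)
    (c : Fin N → Fin N → ℝ) (w : Fin N → ℝ) (E₀ : Multiset (V × V)) (m : Multiset V)
    (hE₀ : ∀ e ∈ E₀, e.1 ≠ u ∧ e.2 ≠ u) (hm : ∀ x ∈ m, x ≠ u)
    (hcol : ∀ j, ∑ i, c i j = 0) :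
    injSum V N c w ((u, ω) ::ₘ E₀) m
      = -∑ x : {x : V // x ≠ u},
          injSum {x : V // x ≠ u} N c w ((x, ⟨ω, hω⟩) ::ₘ eRes u E₀ hE₀) (mRes u m hm) := by
  rw [injSum, injSum_split u]
  have main : ∀ v' : {x : V // x ≠ u} → Fin N,
      (if Injective v' then
        ∑ y : Fin N, (if ∀ x, v' x ≠ y then
          patWeight N c w ((u, ω) ::ₘ E₀) m (glue u y v') else 0) else 0)
      = -∑ x : {x : V // x ≠ u}, (if Injective v' then
          patWeight N c w ((x, ⟨ω, hω⟩) ::ₘ eRes u E₀ hE₀) (mRes u m hm) v' else 0) := by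
    intro v'
    by_cases hv : Injective v'
    · rw [if_pos hv]
      have h1 : ∀ y ∈ (univ : Finset (Fin N)),
          (if (∀ x, v' x ≠ y) then patWeight N c w ((u, ω) ::ₘ E₀) m (glue u y v') else 0)
          = (if (∀ x, v' x ≠ y) then
              c y (v' ⟨ω, hω⟩) * patWeight N c w (eRes u E₀ hE₀) (mRes u m hm) v' else 0) := by
        intro y _
        by_cases h : ∀ x, v' x ≠ y
        · rw [if_pos h, if_pos h, patWeight_cons_edge]
          rw [show glue u y v' (u, ω).1 = y from glue_self u y v']
          rw [show glue u y v' (u, ω).2 = v' ⟨ω, hω⟩ from glue_ne u y v' hω]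
          rw [patWeight_glue u c w E₀ m hE₀ hm y v']
        · rw [if_neg h, if_neg h]
      rw [Finset.sum_congr rfl h1, ← Finset.sum_filter, ← Finset.sum_mul, avoid_filter_eq,
        sum_compl_image hv (fun y => c y (v' ⟨ω, hω⟩)), hcol, zero_sub, neg_mul, Finset.sum_mul]
      congr 1
      apply Finset.sum_congr rfl
      intro x _
      rw [if_pos hv, patWeight_cons_edge]
    · rw [if_neg hv]
      simp only [if_neg hv, Finset.sum_const_zero, neg_zero]
  rw [Finset.sum_congr rfl (fun v' _ => main v'), Finset.sum_neg_distrib]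
  congr 1
  rw [Finset.sum_comm]
  apply Finset.sum_congr rfl
  intro x _
  rw [injSum]

-- edge prune, right orientation
lemma injSum_prune_edgeR {N : ℕ} [Fintype V] (u ω : V) (hω : ω ≠ u)
    (c : Fin N → Fin N → ℝ) (w : Fin N → ℝ) (E₀ : Multiset (V × V)) (m : Multiset V)
    (hE₀ : ∀ e ∈ E₀, e.1 ≠ u ∧ e.2 ≠ u) (hm : ∀ x ∈ m, x ≠ u)
    (hrow : ∀ i, ∑ j, c i j = 0) :
    injSum V N c w ((ω, u) ::ₘ E₀) m
      = -∑ x : {x : V // x ≠ u},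
          injSum {x : V // x ≠ u} N c w ((⟨ω, hω⟩, x) ::ₘ eRes u E₀ hE₀) (mRes u m hm) := by
  rw [injSum, injSum_split u]
  have main : ∀ v' : {x : V // x ≠ u} → Fin N,
      (if Injective v' then
        ∑ y : Fin N, (if ∀ x, v' x ≠ y then
          patWeight N c w ((ω, u) ::ₘ E₀) m (glue u y v') else 0) else 0)
      = -∑ x : {x : V // x ≠ u}, (if Injective v' then
          patWeight N c w ((⟨ω, hω⟩, x) ::ₘ eRes u E₀ hE₀) (mRes u m hm) v' else 0) := by
    intro v'
    by_cases hv : Injective v'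
    · rw [if_pos hv]
      have h1 : ∀ y ∈ (univ : Finset (Fin N)),
          (if (∀ x, v' x ≠ y) then patWeight N c w ((ω, u) ::ₘ E₀) m (glue u y v') else 0)
          = (if (∀ x, v' x ≠ y) then
              c (v' ⟨ω, hω⟩) y * patWeight N c w (eRes u E₀ hE₀) (mRes u m hm) v' else 0) := by
        intro y _
        by_cases h : ∀ x, v' x ≠ y
        · rw [if_pos h, if_pos h, patWeight_cons_edge]
          rw [show glue u y v' (ω, u).2 = y from glue_self u y v']
          rw [show glue u y v' (ω, u).1 = v' ⟨ω, hω⟩ from glue_ne u y v' hω]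
          rw [patWeight_glue u c w E₀ m hE₀ hm y v']
        · rw [if_neg h, if_neg h]
      rw [Finset.sum_congr rfl h1, ← Finset.sum_filter, ← Finset.sum_mul, avoid_filter_eq,
        sum_compl_image hv (fun y => c (v' ⟨ω, hω⟩) y), hrow, zero_sub, neg_mul, Finset.sum_mul]
      congr 1
      apply Finset.sum_congr rfl
      intro x _
      rw [if_pos hv, patWeight_cons_edge]
    · rw [if_neg hv]
      simp only [if_neg hv, Finset.sum_const_zero, neg_zero]
  rw [Finset.sum_congr rfl (fun v' _ => main v'), Finset.sum_neg_distrib]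
  congr 1
  rw [Finset.sum_comm]
  apply Finset.sum_congr rfl
  intro x _
  rw [injSum]

-- mark prune
lemma injSum_prune_mark {N : ℕ} [Fintype V] (u : V)
    (c : Fin N → Fin N → ℝ) (w : Fin N → ℝ) (E : Multiset (V × V)) (m₀ : Multiset V)
    (hE : ∀ e ∈ E, e.1 ≠ u ∧ e.2 ≠ u) (hm₀ : ∀ x ∈ m₀, x ≠ u)
    (hw : ∑ i, w i = 0) :
    injSum V N c w E (u ::ₘ m₀)
      = -∑ x : {x : V // x ≠ u},
          injSum {x : V // x ≠ u} N c w (eRes u E hE) (x ::ₘ mRes u m₀ hm₀) := by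
  rw [injSum, injSum_split u]
  have main : ∀ v' : {x : V // x ≠ u} → Fin N,
      (if Injective v' then
        ∑ y : Fin N, (if ∀ x, v' x ≠ y then
          patWeight N c w E (u ::ₘ m₀) (glue u y v') else 0) else 0)
      = -∑ x : {x : V // x ≠ u}, (if Injective v' then
          patWeight N c w (eRes u E hE) (x ::ₘ mRes u m₀ hm₀) v' else 0) := by
    intro v'
    by_cases hv : Injective v'
    · rw [if_pos hv]
      have h1 : ∀ y ∈ (univ : Finset (Fin N)),
          (if (∀ x, v' x ≠ y) then patWeight N c w E (u ::ₘ m₀) (glue u y v') else 0)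
          = (if (∀ x, v' x ≠ y) then
              w y * patWeight N c w (eRes u E hE) (mRes u m₀ hm₀) v' else 0) := by
        intro y _
        by_cases h : ∀ x, v' x ≠ y
        · rw [if_pos h, if_pos h, patWeight_cons_mark]
          rw [show glue u y v' u = y from glue_self u y v']
          rw [patWeight_glue u c w E m₀ hE hm₀ y v']
        · rw [if_neg h, if_neg h]
      rw [Finset.sum_congr rfl h1, ← Finset.sum_filter, ← Finset.sum_mul, avoid_filter_eq,
        sum_compl_image hv w, hw, zero_sub, neg_mul, Finset.sum_mul]
      congr 1
      apply Finset.sum_congr rfl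
      intro x _
      rw [if_pos hv, patWeight_cons_mark]
    · rw [if_neg hv]
      simp only [if_neg hv, Finset.sum_const_zero, neg_zero]
  rw [Finset.sum_congr rfl (fun v' _ => main v'), Finset.sum_neg_distrib]
  congr 1
  rw [Finset.sum_comm]
  apply Finset.sum_congr rfl
  intro x _
  rw [injSum]


lemma card_ne [Fintype V] (u : V) : Fintype.card {x : V // x ≠ u} = Fintype.card V - 1 := by
  classical
  have h := Fintype.card_subtype_compl (fun x : V => x = u)
  simpa [Fintype.card_subtype_eq] using h

lemma sup_assemble {V' : Type*} [DecidableEq V'] [Fintype V'] {n K1 K2 Z : ℕ}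
    (pat : V' → Multiset (V' × V') × Multiset V')
    (hfam : ∀ x : V', ∃ (e : ℕ) (C : ℝ), 0 ≤ C ∧ e ≤ n ∧
      2 * e ≤ 2 * K1 + K2 + 2 * Z ∧
      ∀ (N : ℕ), 1 ≤ N → ∀ (c : Fin N → Fin N → ℝ) (w : Fin N → ℝ) (α W : ℝ),
        0 ≤ α → 0 ≤ W → (∀ i j, |c i j| ≤ α) → (∀ i, |w i| ≤ W) →
        (∀ j, ∑ i, c i j = 0) → (∀ i, ∑ j, c i j = 0) → (∑ i, w i = 0) →
        |injSum V' N c w (pat x).1 (pat x).2| ≤ C * (N:ℝ) ^ e * α ^ K1 * W ^ K2) :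
    ∃ (e : ℕ) (C : ℝ), 0 ≤ C ∧ e ≤ n ∧ 2 * e ≤ 2 * K1 + K2 + 2 * Z ∧
      ∀ (N : ℕ), 1 ≤ N → ∀ (c : Fin N → Fin N → ℝ) (w : Fin N → ℝ) (α W : ℝ),
        0 ≤ α → 0 ≤ W → (∀ i j, |c i j| ≤ α) → (∀ i, |w i| ≤ W) →
        (∀ j, ∑ i, c i j = 0) → (∀ i, ∑ j, c i j = 0) → (∑ i, w i = 0) →
        |∑ x : V', injSum V' N c w (pat x).1 (pat x).2|
          ≤ C * (N:ℝ) ^ e * α ^ K1 * W ^ K2 := by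
  choose eF CF h0 h1 h2 hb using hfam
  refine ⟨univ.sup eF, ∑ x, CF x, Finset.sum_nonneg fun x _ => h0 x,
    Finset.sup_le fun x _ => h1 x, ?_, ?_⟩
  · rcases isEmpty_or_nonempty V' with hE | hNE
    · simp
    · obtain ⟨x, -, hx⟩ := Finset.exists_mem_eq_sup univ univ_nonempty eF
      rw [hx]; exact h2 x
  · intro N hN c w α W hα hW hc hw hcol hrow hsw
    have hNR : (1:ℝ) ≤ (N:ℝ) := by exact_mod_cast hN
    calc |∑ x : V', injSum V' N c w (pat x).1 (pat x).2|
        ≤ ∑ x : V', |injSum V' N c w (pat x).1 (pat x).2| := Finset.abs_sum_le_sum_abs _ _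
      _ ≤ ∑ x : V', CF x * (N:ℝ) ^ univ.sup eF * α ^ K1 * W ^ K2 := by
          apply Finset.sum_le_sum
          intro x _
          refine le_trans (hb x N hN c w α W hα hW hc hw hcol hrow hsw) ?_
          have hpow : (N:ℝ) ^ eF x ≤ (N:ℝ) ^ univ.sup eF :=
            pow_le_pow_right₀ hNR (Finset.le_sup (mem_univ x))
          have hP : (0:ℝ) ≤ α ^ K1 * W ^ K2 := by positivity
          calc CF x * (N:ℝ)^(eF x) * α^K1 * W^K2
              = CF x * (N:ℝ)^(eF x) * (α^K1 * W^K2) := by ring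
            _ ≤ CF x * (N:ℝ)^(univ.sup eF) * (α^K1 * W^K2) :=
                mul_le_mul_of_nonneg_right
                  (mul_le_mul_of_nonneg_left hpow (h0 x)) hP
            _ = CF x * (N:ℝ)^(univ.sup eF) * α^K1 * W^K2 := by ring
      _ = (∑ x, CF x) * (N:ℝ) ^ univ.sup eF * α ^ K1 * W ^ K2 := by
          rw [← Finset.sum_mul, ← Finset.sum_mul, ← Finset.sum_mul]


theorem injSum_bound : ∀ (n : ℕ) (V : Type) [DecidableEq V] [Fintype V],
    Fintype.card V = n → ∀ (E : Multiset (V × V)) (m : Multiset V),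
    ∃ (e : ℕ) (C : ℝ), 0 ≤ C ∧ e ≤ n ∧
      2 * e ≤ 2 * Multiset.card E + Multiset.card m + 2 * isoCount E m ∧
      ∀ (N : ℕ), 1 ≤ N → ∀ (c : Fin N → Fin N → ℝ) (w : Fin N → ℝ) (α W : ℝ),
        0 ≤ α → 0 ≤ W → (∀ i j, |c i j| ≤ α) → (∀ i, |w i| ≤ W) →
        (∀ j, ∑ i, c i j = 0) → (∀ i, ∑ j, c i j = 0) → (∑ i, w i = 0) →
        |injSum V N c w E m|
          ≤ C * (N:ℝ) ^ e * α ^ Multiset.card E * W ^ Multiset.card m := by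
  intro n
  induction n using Nat.strong_induction_on with
  | _ n IH =>
  intro V instD instF hcard E m
  by_cases h0 : ∃ u : V, occ E m u = 0
  · -- isolated vertex
    obtain ⟨u, hu⟩ := h0
    have huE : (E.map fun e => (if e.1 = u then 1 else 0) + (if e.2 = u then 1 else 0)).sum = 0
        := by unfold occ at hu; omega
    have hum : (m.map fun x => if x = u then (1:ℕ) else 0).sum = 0 := by
      unfold occ at hu; omega
    have hEa : ∀ e ∈ E, e.1 ≠ u ∧ e.2 ≠ u := by
      intro e he
      have h1 := multiset_sum_nat_eq_zero huE e he
      constructor <;> by_contra hcon <;> simp [hcon] at h1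
    have hma : ∀ x ∈ m, x ≠ u := by
      intro x hx
      have h1 := multiset_sum_nat_eq_zero hum x hx
      by_contra hcon; simp [hcon] at h1
    have hn1 : 1 ≤ n := by
      rw [← hcard]
      exact Fintype.card_pos_iff.mpr ⟨u⟩
    have hcard' : Fintype.card {x : V // x ≠ u} = n - 1 := by rw [card_ne, hcard]
    obtain ⟨e', C', hC0, he'le, hinv', hbd'⟩ :=
      IH (n-1) (by omega) {x : V // x ≠ u} hcard' (eRes u E hEa) (mRes u m hma)
    refine ⟨e' + 1, C', hC0, by omega, ?_, ?_⟩
    · have hiso : isoCount (eRes u E hEa) (mRes u m hma) + 1 ≤ isoCount E m := by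
        apply isoCount_succ_le u _ _ E m hu
        intro x hx
        rw [← occ_eRes u E m hEa hma x]
        exact hx
      rw [card_eRes, card_mRes] at hinv'
      omega
    · intro N hN c w α W hα hW hc hw hcol hrow hsw
      rw [injSum_isolated u c w E m hEa hma, abs_mul]
      have h1 : |((N - Fintype.card {x : V // x ≠ u} : ℕ) : ℝ)| ≤ (N:ℝ) := by
        rw [abs_of_nonneg (by positivity)]
        exact_mod_cast Nat.sub_le _ _
      have h2 := hbd' N hN c w α W hα hW hc hw hcol hrow hsw
      rw [card_eRes, card_mRes] at h2
      calc |((N - Fintype.card {x : V // x ≠ u} : ℕ) : ℝ)|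
            * |injSum {x : V // x ≠ u} N c w (eRes u E hEa) (mRes u m hma)|
          ≤ (N:ℝ) * (C' * (N:ℝ) ^ e' * α ^ Multiset.card E * W ^ Multiset.card m) := by
            apply mul_le_mul h1 h2 (abs_nonneg _) (by positivity)
        _ = C' * (N:ℝ) ^ (e' + 1) * α ^ Multiset.card E * W ^ Multiset.card m := by
            rw [pow_succ]; ring
  by_cases h1 : ∃ u : V, occ E m u = 1
  · -- prune a degree-one vertex
    obtain ⟨u, hu⟩ := h1
    have hn1 : 1 ≤ n := by
      rw [← hcard]
      exact Fintype.card_pos_iff.mpr ⟨u⟩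
    have hcard' : Fintype.card {x : V // x ≠ u} = n - 1 := by rw [card_ne, hcard]
    unfold occ at hu
    by_cases hB : (m.map fun x => if x = u then (1:ℕ) else 0).sum = 0
    · -- the single occurrence is in an edge
      have hA : (E.map fun e =>
          (if e.1 = u then 1 else 0) + (if e.2 = u then 1 else 0)).sum = 1 := by omega
      obtain ⟨e₀, E₀, hEeq, he₀, hE₀sum⟩ := exists_cons_of_map_sum_one hA
      subst hEeq
      have hE₀ : ∀ e ∈ E₀, e.1 ≠ u ∧ e.2 ≠ u := by
        intro e he
        have h1 := multiset_sum_nat_eq_zero hE₀sum e he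
        constructor <;> by_contra hcon <;> simp [hcon] at h1
      have hma : ∀ x ∈ m, x ≠ u := by
        intro x hx
        have h1 := multiset_sum_nat_eq_zero hB x hx
        by_contra hcon; simp [hcon] at h1
      by_cases hL : e₀.1 = u
      · -- edge (u, ω)
        have hω : e₀.2 ≠ u := by
          by_contra hcon
          rw [if_pos hL, if_pos hcon] at he₀
          omega
        have hfam : ∀ x : {x : V // x ≠ u}, ∃ (e : ℕ) (C : ℝ), 0 ≤ C ∧ e ≤ n ∧
            2 * e ≤ 2 * Multiset.card (e₀ ::ₘ E₀) + Multiset.card m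
              + 2 * isoCount (e₀ ::ₘ E₀) m ∧
            ∀ (N : ℕ), 1 ≤ N → ∀ (c : Fin N → Fin N → ℝ) (w : Fin N → ℝ) (α W : ℝ),
              0 ≤ α → 0 ≤ W → (∀ i j, |c i j| ≤ α) → (∀ i, |w i| ≤ W) →
              (∀ j, ∑ i, c i j = 0) → (∀ i, ∑ j, c i j = 0) → (∑ i, w i = 0) →
              |injSum {x : V // x ≠ u} N c w
                  (((x, ⟨e₀.2, hω⟩) ::ₘ eRes u E₀ hE₀, mRes u m hma) : _).1
                  (((x, ⟨e₀.2, hω⟩) ::ₘ eRes u E₀ hE₀, mRes u m hma) : _).2|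
                ≤ C * (N:ℝ) ^ e * α ^ Multiset.card (e₀ ::ₘ E₀)
                    * W ^ Multiset.card m := by
          intro x
          obtain ⟨e', C', hC0, he'le, hinv', hbd'⟩ :=
            IH (n-1) (by omega) {x : V // x ≠ u} hcard'
              ((x, ⟨e₀.2, hω⟩) ::ₘ eRes u E₀ hE₀) (mRes u m hma)
          have hcards : Multiset.card ((x, (⟨e₀.2, hω⟩ : {x : V // x ≠ u})) ::ₘ eRes u E₀ hE₀)
              = Multiset.card (e₀ ::ₘ E₀) := by
            simp [Multiset.card_cons]
          have hiso : isoCount ((x, (⟨e₀.2, hω⟩ : {x : V // x ≠ u})) ::ₘ eRes u E₀ hE₀)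
              (mRes u m hma) ≤ isoCount (e₀ ::ₘ E₀) m := by
            apply isoCount_coe_le u
            intro t ht
            rw [occ_cons_edge_eq_zero] at ht ⊢
            obtain ⟨ht1, ht2, ht3⟩ := ht
            rw [occ_eRes u E₀ m hE₀ hma t] at ht3
            refine ⟨?_, ?_, ht3⟩
            · rw [hL]
              exact fun hh => t.2 hh.symm
            · exact fun hh => ht2 (Subtype.ext hh)
          refine ⟨e', C', hC0, by omega, ?_, ?_⟩
          · rw [hcards, card_mRes] at hinv'
            omega
          · intro N hN c w α W hα hW hc hw hcol hrow hsw
            have := hbd' N hN c w α W hα hW hc hw hcol hrow hsw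
            rw [hcards, card_mRes] at this
            exact this
        obtain ⟨e, C, hC, hle, hinv, hbound⟩ := sup_assemble _ hfam
        refine ⟨e, C, hC, hle, hinv, ?_⟩
        intro N hN c w α W hα hW hc hw hcol hrow hsw
        have hrewrite : e₀ = (u, e₀.2) := by
          rw [← hL]
        rw [hrewrite, injSum_prune_edgeL u e₀.2 hω c w E₀ m hE₀ hma hcol, abs_neg]
        have := hbound N hN c w α W hα hW hc hw hcol hrow hsw
        rw [show Multiset.card ((u, e₀.2) ::ₘ E₀) = Multiset.card (e₀ ::ₘ E₀) by
          simp [Multiset.card_cons]]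
        exact this
      · -- edge (ω, u)
        have hωu : e₀.2 = u := by
          rw [if_neg hL] at he₀
          by_contra hcon
          rw [if_neg hcon] at he₀
          omega
        have hω : e₀.1 ≠ u := hL
        have hfam : ∀ x : {x : V // x ≠ u}, ∃ (e : ℕ) (C : ℝ), 0 ≤ C ∧ e ≤ n ∧
            2 * e ≤ 2 * Multiset.card (e₀ ::ₘ E₀) + Multiset.card m
              + 2 * isoCount (e₀ ::ₘ E₀) m ∧
            ∀ (N : ℕ), 1 ≤ N → ∀ (c : Fin N → Fin N → ℝ) (w : Fin N → ℝ) (α W : ℝ),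
              0 ≤ α → 0 ≤ W → (∀ i j, |c i j| ≤ α) → (∀ i, |w i| ≤ W) →
              (∀ j, ∑ i, c i j = 0) → (∀ i, ∑ j, c i j = 0) → (∑ i, w i = 0) →
              |injSum {x : V // x ≠ u} N c w
                  ((((⟨e₀.1, hω⟩ : {x : V // x ≠ u}), x) ::ₘ eRes u E₀ hE₀, mRes u m hma) : _).1
                  ((((⟨e₀.1, hω⟩ : {x : V // x ≠ u}), x) ::ₘ eRes u E₀ hE₀, mRes u m hma) : _).2|
                ≤ C * (N:ℝ) ^ e * α ^ Multiset.card (e₀ ::ₘ E₀)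
                    * W ^ Multiset.card m := by
          intro x
          obtain ⟨e', C', hC0, he'le, hinv', hbd'⟩ :=
            IH (n-1) (by omega) {x : V // x ≠ u} hcard'
              (((⟨e₀.1, hω⟩ : {x : V // x ≠ u}), x) ::ₘ eRes u E₀ hE₀) (mRes u m hma)
          have hcards : Multiset.card (((⟨e₀.1, hω⟩ : {x : V // x ≠ u}), x) ::ₘ eRes u E₀ hE₀)
              = Multiset.card (e₀ ::ₘ E₀) := by
            simp [Multiset.card_cons]
          have hiso : isoCount (((⟨e₀.1, hω⟩ : {x : V // x ≠ u}), x) ::ₘ eRes u E₀ hE₀)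
              (mRes u m hma) ≤ isoCount (e₀ ::ₘ E₀) m := by
            apply isoCount_coe_le u
            intro t ht
            rw [occ_cons_edge_eq_zero] at ht ⊢
            obtain ⟨ht1, ht2, ht3⟩ := ht
            rw [occ_eRes u E₀ m hE₀ hma t] at ht3
            refine ⟨?_, ?_, ht3⟩
            · exact fun hh => ht1 (Subtype.ext hh)
            · rw [hωu]
              exact fun hh => t.2 hh.symm
          refine ⟨e', C', hC0, by omega, ?_, ?_⟩
          · rw [hcards, card_mRes] at hinv'
            omega
          · intro N hN c w α W hα hW hc hw hcol hrow hsw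
            have := hbd' N hN c w α W hα hW hc hw hcol hrow hsw
            rw [hcards, card_mRes] at this
            exact this
        obtain ⟨e, C, hC, hle, hinv, hbound⟩ := sup_assemble _ hfam
        refine ⟨e, C, hC, hle, hinv, ?_⟩
        intro N hN c w α W hα hW hc hw hcol hrow hsw
        have hrewrite : e₀ = (e₀.1, u) := by
          rw [← hωu]
        rw [hrewrite, injSum_prune_edgeR u e₀.1 hω c w E₀ m hE₀ hma hrow, abs_neg]
        have := hbound N hN c w α W hα hW hc hw hcol hrow hsw
        rw [show Multiset.card ((e₀.1, u) ::ₘ E₀) = Multiset.card (e₀ ::ₘ E₀) by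
          simp [Multiset.card_cons]]
        exact this
    · -- the single occurrence is a mark
      have hBm : (m.map fun x => if x = u then (1:ℕ) else 0).sum = 1 := by omega
      have hA : (E.map fun e =>
          (if e.1 = u then 1 else 0) + (if e.2 = u then 1 else 0)).sum = 0 := by omega
      obtain ⟨x₀, m₀, hmeq, hx₀, hm₀sum⟩ := exists_cons_of_map_sum_one hBm
      have hx₀u : x₀ = u := by
        by_contra hcon
        rw [if_neg hcon] at hx₀
        omega
      rw [hx₀u] at hmeq
      subst hmeq
      have hEa : ∀ e ∈ E, e.1 ≠ u ∧ e.2 ≠ u := by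
        intro e he
        have h1 := multiset_sum_nat_eq_zero hA e he
        constructor <;> by_contra hcon <;> simp [hcon] at h1
      have hm₀ : ∀ x ∈ m₀, x ≠ u := by
        intro x hx
        have h1 := multiset_sum_nat_eq_zero hm₀sum x hx
        by_contra hcon; simp [hcon] at h1
      have hfam : ∀ x : {x : V // x ≠ u}, ∃ (e : ℕ) (C : ℝ), 0 ≤ C ∧ e ≤ n ∧
          2 * e ≤ 2 * Multiset.card E + Multiset.card (u ::ₘ m₀)
            + 2 * isoCount E (u ::ₘ m₀) ∧
          ∀ (N : ℕ), 1 ≤ N → ∀ (c : Fin N → Fin N → ℝ) (w : Fin N → ℝ) (α W : ℝ),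
            0 ≤ α → 0 ≤ W → (∀ i j, |c i j| ≤ α) → (∀ i, |w i| ≤ W) →
            (∀ j, ∑ i, c i j = 0) → (∀ i, ∑ j, c i j = 0) → (∑ i, w i = 0) →
            |injSum {x : V // x ≠ u} N c w
                ((eRes u E hEa, x ::ₘ mRes u m₀ hm₀) : _).1
                ((eRes u E hEa, x ::ₘ mRes u m₀ hm₀) : _).2|
              ≤ C * (N:ℝ) ^ e * α ^ Multiset.card E
                  * W ^ Multiset.card (u ::ₘ m₀) := by
        intro x
        obtain ⟨e', C', hC0, he'le, hinv', hbd'⟩ :=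
          IH (n-1) (by omega) {x : V // x ≠ u} hcard'
            (eRes u E hEa) (x ::ₘ mRes u m₀ hm₀)
        have hcards : Multiset.card (x ::ₘ mRes u m₀ hm₀) = Multiset.card (u ::ₘ m₀) := by
          simp [Multiset.card_cons]
        have hiso : isoCount (eRes u E hEa) (x ::ₘ mRes u m₀ hm₀)
            ≤ isoCount E (u ::ₘ m₀) := by
          apply isoCount_coe_le u
          intro t ht
          rw [occ_cons_mark_eq_zero] at ht ⊢
          obtain ⟨ht1, ht2⟩ := ht
          rw [occ_eRes u E m₀ hEa hm₀ t] at ht2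
          exact ⟨fun hh => t.2 hh.symm, ht2⟩
        refine ⟨e', C', hC0, by omega, ?_, ?_⟩
        · rw [hcards, card_eRes] at hinv'
          omega
        · intro N hN c w α W hα hW hc hw hcol hrow hsw
          have := hbd' N hN c w α W hα hW hc hw hcol hrow hsw
          rw [hcards, card_eRes] at this
          exact this
      obtain ⟨e, C, hC, hle, hinv, hbound⟩ := sup_assemble _ hfam
      refine ⟨e, C, hC, hle, hinv, ?_⟩
      intro N hN c w α W hα hW hc hw hcol hrow hsw
      rw [injSum_prune_mark u c w E m₀ hEa hm₀ hsw, abs_neg]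
      exact hbound N hN c w α W hα hW hc hw hcol hrow hsw
  · -- every vertex has at least two occurrences
    push_neg at h0 h1
    refine ⟨n, 1, zero_le_one, le_rfl, ?_, ?_⟩
    · have hocc : ∀ u : V, 2 ≤ occ E m u := by
        intro u
        have := h0 u
        have := h1 u
        omega
      have hsum := sum_occ E m
      have h2 : 2 * n ≤ ∑ u : V, occ E m u := by
        calc 2 * n = ∑ _u : V, 2 := by
              rw [Finset.sum_const, Finset.card_univ, hcard, smul_eq_mul]; ring
          _ ≤ ∑ u, occ E m u := Finset.sum_le_sum fun u _ => hocc u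
      omega
    · intro N hN c w α W hα hW hc hw hcol hrow hsw
      calc |injSum V N c w E m|
          ≤ ∑ v : V → Fin N, |if Injective v then patWeight N c w E m v else 0| :=
            Finset.abs_sum_le_sum_abs _ _
        _ ≤ ∑ _v : V → Fin N, α ^ Multiset.card E * W ^ Multiset.card m := by
            apply Finset.sum_le_sum
            intro v _
            by_cases hv : Injective v
            · rw [if_pos hv]
              exact abs_patWeight_le c w E m v hα hW hc hw
            · rw [if_neg hv, abs_zero]
              positivity
        _ = 1 * (N:ℝ) ^ n * α ^ Multiset.card E * W ^ Multiset.card m := by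
            rw [Finset.sum_const, Finset.card_univ, Fintype.card_fun, Fintype.card_fin,
              hcard, nsmul_eq_mul]
            push_cast
            ring


section Counting

lemma exists_perm_comp {ρ N : ℕ} (v w : Fin ρ → Fin N) (hv : Injective v) (hw : Injective w) :
    ∃ π : Equiv.Perm (Fin N), ∀ x, π (v x) = w x := by
  classical
  have hrv : Fintype.card {y : Fin N // y ∈ Set.range v} = ρ := by
    rw [← Fintype.card_congr (Equiv.ofInjective v hv)]
    simp
  have hrw : Fintype.card {y : Fin N // y ∈ Set.range w} = ρ := by
    rw [← Fintype.card_congr (Equiv.ofInjective w hw)]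
    simp
  have hcv : Fintype.card {y : Fin N // y ∉ Set.range v}
      = Fintype.card {y : Fin N // y ∉ Set.range w} := by
    rw [Fintype.card_subtype_compl, Fintype.card_subtype_compl, hrv, hrw]
  let g := Fintype.equivOfCardEq hcv
  let e : Fin N ≃ Fin N :=
    (Equiv.Set.sumCompl (Set.range v)).symm.trans
      ((((Equiv.ofInjective v hv).symm.trans (Equiv.ofInjective w hw)).sumCongr g).trans
        (Equiv.Set.sumCompl (Set.range w)))
  refine ⟨e, fun x => ?_⟩
  have h1 : (Equiv.Set.sumCompl (Set.range v)).symm (v x)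
      = Sum.inl ⟨v x, Set.mem_range_self x⟩ :=
    Equiv.Set.sumCompl_symm_apply_of_mem (Set.mem_range_self x)
  have h2 : (Equiv.ofInjective v hv).symm ⟨v x, Set.mem_range_self x⟩ = x := by
    apply hv
    have := Equiv.ofInjective_symm_apply (f := v) hv x
    simp [Equiv.apply_symm_apply]
  show (Equiv.Set.sumCompl (Set.range w))
      ((((Equiv.ofInjective v hv).symm.trans (Equiv.ofInjective w hw)).sumCongr g)
        ((Equiv.Set.sumCompl (Set.range v)).symm (v x))) = w x
  rw [h1]
  simp only [Equiv.sumCongr_apply, Sum.map_inl, Equiv.trans_apply, h2]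
  simp only [Equiv.ofInjective_apply]
  exact Equiv.Set.sumCompl_apply_inl (Set.range w) _

lemma fiber_card_eq_stab {ρ N : ℕ} (v w : Fin ρ → Fin N) (hv : Injective v) (hw : Injective w) :
    (univ.filter fun π : Equiv.Perm (Fin N) => ⇑π ∘ v = w).card
      = (univ.filter fun π : Equiv.Perm (Fin N) => ⇑π ∘ v = v).card := by
  classical
  obtain ⟨π₀, hπ₀⟩ := exists_perm_comp v w hv hw
  apply Finset.card_bij (fun π _ => π₀⁻¹ * π)
  · intro π hπ
    simp only [mem_filter, mem_univ, true_and] at hπ ⊢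
    funext x
    have : π (v x) = w x := congrFun hπ x
    simp [Equiv.Perm.mul_apply, this, ← hπ₀ x]
  · intro π hπ π' hπ' h
    exact mul_left_cancel h
  · intro σ hσ
    simp only [mem_filter, mem_univ, true_and] at hσ
    refine ⟨π₀ * σ, ?_, by group⟩
    simp only [mem_filter, mem_univ, true_and]
    funext x
    have : σ (v x) = v x := congrFun hσ x
    simp [Equiv.Perm.mul_apply, this, hπ₀ x]

lemma card_inj_filter (ρ N : ℕ) :
    (univ.filter fun g : Fin ρ → Fin N => Injective g).card = N.descFactorial ρ := by
  classical
  rw [← Fintype.card_subtype]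
  rw [Fintype.card_congr (Equiv.subtypeInjectiveEquivEmbedding (Fin ρ) (Fin N))]
  rw [Fintype.card_embedding_eq]
  simp

lemma card_perm_fiber {ρ N : ℕ} (v : Fin ρ → Fin N) (hv : Injective v)
    (w : Fin ρ → Fin N) :
    (univ.filter fun π : Equiv.Perm (Fin N) => ⇑π ∘ v = w).card
      = if Injective w then (N - ρ).factorial else 0 := by
  classical
  by_cases hw : Injective w
  · rw [if_pos hw, fiber_card_eq_stab v w hv hw]
    -- count the stabiliser via a global count
    have hρN : ρ ≤ N := by
      have := Fintype.card_le_of_injective v hv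
      simpa using this
    have htotal : (Fintype.card (Equiv.Perm (Fin N)))
        = ∑ g : Fin ρ → Fin N, (univ.filter fun π : Equiv.Perm (Fin N) => ⇑π ∘ v = g).card := by
      rw [← Finset.card_univ]
      exact Finset.card_eq_sum_card_fiberwise (fun π _ => mem_univ (⇑π ∘ v))
    have hfib : ∀ g : Fin ρ → Fin N,
        (univ.filter fun π : Equiv.Perm (Fin N) => ⇑π ∘ v = g).card
        = if Injective g then
            (univ.filter fun π : Equiv.Perm (Fin N) => ⇑π ∘ v = v).card else 0 := by
      intro g
      by_cases hg : Injective g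
      · rw [if_pos hg]
        exact fiber_card_eq_stab v g hv hg
      · rw [if_neg hg, Finset.card_eq_zero, Finset.filter_eq_empty_iff]
        intro π _
        intro hc
        exact hg (hc ▸ (π.injective.comp hv))
    rw [Finset.sum_congr rfl (fun g _ => hfib g)] at htotal
    rw [Finset.sum_ite, Finset.sum_const, Finset.sum_const_zero, add_zero] at htotal
    rw [card_inj_filter ρ N, smul_eq_mul] at htotal
    rw [Fintype.card_perm, Fintype.card_fin] at htotal
    have hkey : (N - ρ).factorial * N.descFactorial ρ = N.descFactorial ρ
        * (univ.filter fun π : Equiv.Perm (Fin N) => ⇑π ∘ v = v).card := by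
      rw [← htotal, Nat.factorial_mul_descFactorial hρN]
    have hpos : 0 < N.descFactorial ρ := by
      rcases Nat.eq_zero_or_pos (N.descFactorial ρ) with h | h
      · exfalso
        have := Nat.descFactorial_eq_zero_iff_lt.mp h
        omega
      · exact h
    rw [mul_comm ((N-ρ).factorial)] at hkey
    exact (Nat.eq_of_mul_eq_mul_left hpos hkey).symm
  · rw [if_neg hw, Finset.card_eq_zero, Finset.filter_eq_empty_iff]
    intro π _
    intro hc
    exact hw (hc ▸ (π.injective.comp hv))

lemma sum_perm_comp {ρ N : ℕ} (v : Fin ρ → Fin N) (hv : Injective v)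
    (h : (Fin ρ → Fin N) → ℝ) :
    ∑ π : Equiv.Perm (Fin N), h (⇑π ∘ v)
      = ((N - ρ).factorial : ℝ)
          * ∑ g : Fin ρ → Fin N, (if Injective g then h g else 0) := by
  classical
  rw [← Finset.sum_fiberwise_of_maps_to
    (g := fun π : Equiv.Perm (Fin N) => ⇑π ∘ v) (fun π _ => mem_univ _)
    (f := fun π => h (⇑π ∘ v))]
  rw [Finset.mul_sum]
  apply Finset.sum_congr rfl
  intro g _
  have hcongr : ∀ π ∈ univ.filter fun π : Equiv.Perm (Fin N) => ⇑π ∘ v = g,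
      h (⇑π ∘ v) = h g := by
    intro π hπ
    simp only [mem_filter, mem_univ, true_and] at hπ
    rw [hπ]
  rw [Finset.sum_congr rfl hcongr, Finset.sum_const, card_perm_fiber v hv g, nsmul_eq_mul]
  by_cases hg : Injective g
  · rw [if_pos hg, if_pos hg]
  · rw [if_neg hg, if_neg hg]
    simp

end Counting


section Grouping

variable {S : Type*} [Fintype S] [DecidableEq S]

lemma card_pattern_fiber {N ρ : ℕ} (T : S → Fin N) :
    (univ.filter fun pv : (S → Fin ρ) × (Fin ρ → Fin N) =>
      Surjective pv.1 ∧ Injective pv.2 ∧ pv.2 ∘ pv.1 = T).card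
    = if (univ.image T).card = ρ then ρ.factorial else 0 := by
  classical
  by_cases hρ : (univ.image T).card = ρ
  · rw [if_pos hρ]
    -- base decomposition
    set I : Finset (Fin N) := univ.image T with hI
    let q : {y // y ∈ I} ≃ Fin ρ := I.equivFin.trans (finCongr hρ)
    let v₀ : Fin ρ → Fin N := fun i => (q.symm i : Fin N)
    let p₀ : S → Fin ρ := fun s => q ⟨T s, mem_image_of_mem T (mem_univ s)⟩
    have hv₀ : Injective v₀ := by
      intro i j hij
      have : q.symm i = q.symm j := Subtype.ext hij
      simpa using congrArg q this
    have hcomp₀ : v₀ ∘ p₀ = T := by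
      funext s
      show (q.symm (q ⟨T s, _⟩) : Fin N) = T s
      rw [Equiv.symm_apply_apply]
    have hp₀ : Surjective p₀ := by
      intro i
      have hy : (q.symm i : Fin N) ∈ I := (q.symm i).2
      obtain ⟨s, _, hs⟩ := Finset.mem_image.mp hy
      refine ⟨s, ?_⟩
      show q ⟨T s, _⟩ = i
      have h5 : (⟨T s, mem_image_of_mem T (mem_univ s)⟩ : {y // y ∈ I}) = q.symm i :=
        Subtype.ext (by simpa using hs)
      rw [h5, Equiv.apply_symm_apply]
    rw [show ρ.factorial = Fintype.card (Equiv.Perm (Fin ρ)) by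
      rw [Fintype.card_perm, Fintype.card_fin], ← Finset.card_univ]
    symm
    apply Finset.card_bij (fun (σ : Equiv.Perm (Fin ρ)) _ => ((⇑σ ∘ p₀, v₀ ∘ ⇑σ.symm) :
      (S → Fin ρ) × (Fin ρ → Fin N)))
    · intro σ _
      simp only [mem_filter, mem_univ, true_and]
      refine ⟨σ.surjective.comp hp₀, hv₀.comp σ.symm.injective, ?_⟩
      funext s
      show v₀ (σ.symm (σ (p₀ s))) = T s
      rw [Equiv.symm_apply_apply]
      exact congrFun hcomp₀ s
    · intro σ _ σ' _ hEq
      have h1 : ⇑σ ∘ p₀ = ⇑σ' ∘ p₀ := congrArg Prod.fst hEq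
      apply Equiv.ext
      intro i
      obtain ⟨s, rfl⟩ := hp₀ i
      exact congrFun h1 s
    · rintro ⟨p, v⟩ hpv
      simp only [mem_filter, mem_univ, true_and] at hpv
      obtain ⟨hp, hv, hcomp⟩ := hpv
      -- p is constant on fibres of p₀
      have hconst : ∀ s s', p₀ s = p₀ s' → p s = p s' := by
        intro s s' h
        have hT : T s = T s' := by
          have := congrArg v₀ h
          rw [show v₀ (p₀ s) = T s from congrFun hcomp₀ s,
            show v₀ (p₀ s') = T s' from congrFun hcomp₀ s'] at this
          exact this
        apply hv
        rw [show v (p s) = T s from congrFun hcomp s,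
          show v (p s') = T s' from congrFun hcomp s', hT]
      let σf : Fin ρ → Fin ρ := fun i => p (surjInv hp₀ i)
      have hσp : ∀ s, σf (p₀ s) = p s := by
        intro s
        apply hconst
        exact surjInv_eq hp₀ (p₀ s)
      have hσsurj : Surjective σf := by
        intro i
        obtain ⟨s, rfl⟩ := hp i
        exact ⟨p₀ s, hσp s⟩
      have hσbij : Bijective σf := (Finite.surjective_iff_bijective).mp hσsurj
      let σ : Equiv.Perm (Fin ρ) := Equiv.ofBijective σf hσbij
      refine ⟨σ, mem_univ σ, ?_⟩
      have hfst : ⇑σ ∘ p₀ = p := by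
        funext s
        exact hσp s
      have hsnd : v₀ ∘ ⇑σ.symm = v := by
        funext i
        obtain ⟨s, rfl⟩ := hp i
        have : σ.symm (p s) = p₀ s := by
          apply σ.injective
          rw [Equiv.apply_symm_apply]
          exact (hσp s).symm
        show v₀ (σ.symm (p s)) = v (p s)
        rw [this, show v₀ (p₀ s) = T s from congrFun hcomp₀ s,
          show v (p s) = T s from congrFun hcomp s]
      rw [Prod.ext_iff]
      exact ⟨hfst, hsnd⟩
  · rw [if_neg hρ, Finset.card_eq_zero, Finset.filter_eq_empty_iff]
    rintro ⟨p, v⟩ _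
    rintro ⟨hp, hv, hcomp⟩
    apply hρ
    have himg : univ.image T = univ.image v := by
      rw [← hcomp]
      rw [show univ.image (v ∘ p) = (univ.image p).image v from
        (Finset.image_image (s := univ) (g := v) (f := p)).symm]
      congr 1
      apply Finset.eq_univ_iff_forall.mpr
      intro i
      obtain ⟨s, rfl⟩ := hp i
      exact mem_image_of_mem p (mem_univ s)
    rw [himg, Finset.card_image_of_injective _ hv, Finset.card_univ, Fintype.card_fin]

lemma group_sum (N : ℕ) (Φ : (S → Fin N) → ℝ) :
    ∑ T : S → Fin N, Φ T
      = ∑ ρ ∈ Finset.range (Fintype.card S + 1), (ρ.factorial : ℝ)⁻¹ *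
          ∑ p : S → Fin ρ, (if Surjective p then
            ∑ v : Fin ρ → Fin N, (if Injective v then Φ (v ∘ p) else 0) else 0) := by
  classical
  have hinner : ∀ ρ : ℕ,
      (∑ p : S → Fin ρ, (if Surjective p then
        ∑ v : Fin ρ → Fin N, (if Injective v then Φ (v ∘ p) else 0) else 0))
      = ∑ T : S → Fin N, (if (univ.image T).card = ρ then (ρ.factorial : ℝ) else 0) * Φ T := by
    intro ρ
    have h1 : (∑ p : S → Fin ρ, (if Surjective p then
        ∑ v : Fin ρ → Fin N, (if Injective v then Φ (v ∘ p) else 0) else 0))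
        = ∑ pv : (S → Fin ρ) × (Fin ρ → Fin N),
            (if Surjective pv.1 ∧ Injective pv.2 then Φ (pv.2 ∘ pv.1) else 0) := by
      rw [Fintype.sum_prod_type]
      apply Finset.sum_congr rfl
      intro p _
      by_cases hp : Surjective p
      · rw [if_pos hp]
        apply Finset.sum_congr rfl
        intro v _
        by_cases hv : Injective v
        · rw [if_pos hv, if_pos ⟨hp, hv⟩]
        · rw [if_neg hv, if_neg (fun hc => hv hc.2)]
      · rw [if_neg hp]
        symm
        apply Finset.sum_eq_zero
        intro v _
        exact if_neg (fun hc => hp hc.1)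
    rw [h1]
    rw [← Finset.sum_fiberwise_of_maps_to
      (g := fun pv : (S → Fin ρ) × (Fin ρ → Fin N) => pv.2 ∘ pv.1)
      (fun pv _ => mem_univ _)
      (f := fun pv => if Surjective pv.1 ∧ Injective pv.2 then Φ (pv.2 ∘ pv.1) else 0)]
    apply Finset.sum_congr rfl
    intro T _
    have h2 : ∀ pv ∈ univ.filter
        (fun pv : (S → Fin ρ) × (Fin ρ → Fin N) => pv.2 ∘ pv.1 = T),
        (if Surjective pv.1 ∧ Injective pv.2 then Φ (pv.2 ∘ pv.1) else 0)
        = (if Surjective pv.1 ∧ Injective pv.2 then (1:ℝ) else 0) * Φ T := by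
      intro pv hpv
      simp only [mem_filter, mem_univ, true_and] at hpv
      by_cases hc : Surjective pv.1 ∧ Injective pv.2
      · rw [if_pos hc, if_pos hc, hpv, one_mul]
      · rw [if_neg hc, if_neg hc, zero_mul]
    rw [Finset.sum_congr rfl h2, ← Finset.sum_mul]
    congr 1
    rw [Finset.sum_ite, Finset.sum_const, Finset.sum_const_zero, add_zero, nsmul_eq_mul,
      mul_one, Finset.filter_filter]
    have h3 : (univ.filter fun pv : (S → Fin ρ) × (Fin ρ → Fin N) =>
        pv.2 ∘ pv.1 = T ∧ Surjective pv.1 ∧ Injective pv.2).card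
        = (univ.filter fun pv : (S → Fin ρ) × (Fin ρ → Fin N) =>
          Surjective pv.1 ∧ Injective pv.2 ∧ pv.2 ∘ pv.1 = T).card := by
      congr 1
      apply Finset.filter_congr
      intro pv _
      constructor
      · rintro ⟨h1', h2', h3'⟩; exact ⟨h2', h3', h1'⟩
      · rintro ⟨h1', h2', h3'⟩; exact ⟨h3', h1', h2'⟩
    rw [h3, card_pattern_fiber T]
    by_cases hρ : (univ.image T).card = ρ
    · rw [if_pos hρ, if_pos hρ]
    · rw [if_neg hρ, if_neg hρ]
      simp
  calc ∑ T : S → Fin N, Φ T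
      = ∑ T : S → Fin N, ∑ ρ ∈ Finset.range (Fintype.card S + 1),
          (ρ.factorial : ℝ)⁻¹
            * ((if (univ.image T).card = ρ then (ρ.factorial : ℝ) else 0) * Φ T) := by
        apply Finset.sum_congr rfl
        intro T _
        have hmem : (univ.image T).card ∈ Finset.range (Fintype.card S + 1) := by
          rw [Finset.mem_range]
          have := Finset.card_image_le (s := (univ : Finset S)) (f := T)
          rw [Finset.card_univ] at this
          omega
        symm
        rw [Finset.sum_eq_single ((univ.image T).card)]
        · rw [if_pos rfl, ← mul_assoc,
            inv_mul_cancel₀ (by exact_mod_cast (Nat.factorial_ne_zero _)), one_mul]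
        · intro ρ _ hne
          rw [if_neg (fun hc => hne hc.symm)]
          simp
        · intro hnot
          exact absurd hmem hnot
    _ = ∑ ρ ∈ Finset.range (Fintype.card S + 1), ∑ T : S → Fin N,
          (ρ.factorial : ℝ)⁻¹
            * ((if (univ.image T).card = ρ then (ρ.factorial : ℝ) else 0) * Φ T) :=
        Finset.sum_comm
    _ = _ := by
        apply Finset.sum_congr rfl
        intro ρ _
        rw [hinner ρ, Finset.mul_sum]
end Grouping


section Decomp

lemma le_arrMax {N : ℕ} (a : Fin N → Fin N → ℝ) (i j : Fin N) : |a i j| ≤ arrMax N a := by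
  rw [arrMax]
  have h1 : |a i j| ≤ ⨆ j', |a i j'| :=
    le_ciSup (f := fun j' => |a i j'|) (Set.Finite.bddAbove (Set.finite_range _)) j
  exact h1.trans (le_ciSup (f := fun i' => ⨆ j', |a i' j'|)
    (Set.Finite.bddAbove (Set.finite_range _)) i)

lemma arrMax_nonneg {N : ℕ} (hN : 1 ≤ N) (a : Fin N → Fin N → ℝ) : 0 ≤ arrMax N a := by
  have i : Fin N := ⟨0, hN⟩
  exact (abs_nonneg (a i i)).trans (le_arrMax a i i)

def rowSum (N : ℕ) (a : Fin N → Fin N → ℝ) (i : Fin N) : ℝ := ∑ j, a i j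

noncomputable def ctr (N : ℕ) (a : Fin N → Fin N → ℝ) (i j : Fin N) : ℝ :=
  a i j - rowSum N a i / N - rowSum N a j / N

lemma abs_rowSum_le {N : ℕ} (a : Fin N → Fin N → ℝ) (i : Fin N) :
    |rowSum N a i| ≤ N * arrMax N a := by
  calc |rowSum N a i| ≤ ∑ j, |a i j| := Finset.abs_sum_le_sum_abs _ _
    _ ≤ ∑ _j : Fin N, arrMax N a := Finset.sum_le_sum fun j _ => le_arrMax a i j
    _ = N * arrMax N a := by rw [Finset.sum_const, Finset.card_univ, Fintype.card_fin,
        nsmul_eq_mul]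

lemma abs_ctr_le {N : ℕ} (hN : 1 ≤ N) (a : Fin N → Fin N → ℝ) (i j : Fin N) :
    |ctr N a i j| ≤ 3 * arrMax N a := by
  have hNpos : (0:ℝ) < N := by exact_mod_cast hN
  have h1 : |rowSum N a i / N| ≤ arrMax N a := by
    rw [abs_div, abs_of_pos hNpos]
    rw [div_le_iff₀ hNpos]
    calc |rowSum N a i| ≤ N * arrMax N a := abs_rowSum_le a i
      _ = arrMax N a * N := by ring
  have h2 : |rowSum N a j / N| ≤ arrMax N a := by
    rw [abs_div, abs_of_pos hNpos]
    rw [div_le_iff₀ hNpos]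
    calc |rowSum N a j| ≤ N * arrMax N a := abs_rowSum_le a j
      _ = arrMax N a * N := by ring
  calc |ctr N a i j| ≤ |a i j| + |rowSum N a i / N| + |rowSum N a j / N| := by
        rw [ctr]
        exact (abs_sub _ _).trans (add_le_add (abs_sub _ _) le_rfl)
    _ ≤ 3 * arrMax N a := by
        have := le_arrMax a i j
        linarith

lemma rowSum_total {N : ℕ} (a : Fin N → Fin N → ℝ) (ha : ∑ i, ∑ j, a i j = 0) :
    ∑ i, rowSum N a i = 0 := ha

lemma colSum_eq {N : ℕ} (a : Fin N → Fin N → ℝ) (hsymm : ∀ i j, a i j = a j i) (j : Fin N) :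
    ∑ i, a i j = rowSum N a j := by
  rw [rowSum]
  apply Finset.sum_congr rfl
  intro i _
  rw [hsymm]

lemma ctr_row_zero {N : ℕ} (hN : 1 ≤ N) (a : Fin N → Fin N → ℝ)
    (ha : ∑ i, ∑ j, a i j = 0) (i : Fin N) : ∑ v, ctr N a i v = 0 := by
  have hNne : (N:ℝ) ≠ 0 := by positivity
  unfold ctr
  rw [Finset.sum_sub_distrib, Finset.sum_sub_distrib]
  have h1 : ∑ v : Fin N, rowSum N a i / N = rowSum N a i := by
    rw [Finset.sum_const, Finset.card_univ, Fintype.card_fin, nsmul_eq_mul]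
    field_simp
  have h2 : ∑ v, rowSum N a v / N = 0 := by
    rw [← Finset.sum_div, rowSum_total a ha, zero_div]
  rw [h1, h2]
  show rowSum N a i - rowSum N a i - 0 = 0
  ring

lemma ctr_symm {N : ℕ} (a : Fin N → Fin N → ℝ) (hsymm : ∀ i j, a i j = a j i) (i j : Fin N) :
    ctr N a i j = ctr N a j i := by
  unfold ctr
  rw [hsymm]
  ring

lemma ctr_col_zero {N : ℕ} (hN : 1 ≤ N) (a : Fin N → Fin N → ℝ)
    (hsymm : ∀ i j, a i j = a j i) (ha : ∑ i, ∑ j, a i j = 0) (j : Fin N) :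
    ∑ u, ctr N a u j = 0 := by
  rw [Finset.sum_congr rfl (fun u _ => ctr_symm a hsymm u j)]
  exact ctr_row_zero hN a ha j

lemma gamma_decomp {N : ℕ} (hN : 1 ≤ N) (a b : Fin N → Fin N → ℝ)
    (ha_symm : ∀ i j, a i j = a j i) (hb_symm : ∀ i j, b i j = b j i)
    (ha_sum : ∑ i, ∑ j, a i j = 0) (hb_sum : ∑ i, ∑ j, b i j = 0)
    (π : Equiv.Perm (Fin N)) :
    gammaStat N a b π
      = (∑ i, ∑ j, ctr N a i j * ctr N b (π i) (π j))
        + ∑ i, (2 / N * rowSum N a i) * rowSum N b (π i) := by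
  have hNne : (N:ℝ) ≠ 0 := by positivity
  -- row/col sums of bbar evaluated along π
  have hrowb : ∀ i : Fin N, ∑ j, ctr N b (π i) (π j) = 0 := by
    intro i
    rw [show (∑ j, ctr N b (π i) (π j)) = ∑ v, ctr N b (π i) v from
      Equiv.sum_comp π (fun v => ctr N b (π i) v)]
    exact ctr_row_zero hN b hb_sum (π i)
  have hcolb : ∀ j : Fin N, ∑ i, ctr N b (π i) (π j) = 0 := by
    intro j
    rw [show (∑ i, ctr N b (π i) (π j)) = ∑ u, ctr N b u (π j) from
      Equiv.sum_comp π (fun u => ctr N b u (π j))]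
    exact ctr_col_zero hN b hb_symm hb_sum (π j)
  have hrowb' : ∀ i : Fin N, ∑ j, b (π i) (π j) = rowSum N b (π i) := by
    intro i
    rw [show (∑ j, b (π i) (π j)) = ∑ v, b (π i) v from
      Equiv.sum_comp π (fun v => b (π i) v)]
    rfl
  have hcolb' : ∀ j : Fin N, ∑ i, b (π i) (π j) = rowSum N b (π j) := by
    intro j
    rw [show (∑ i, b (π i) (π j)) = ∑ u, b u (π j) from
      Equiv.sum_comp π (fun u => b u (π j))]
    exact colSum_eq b hb_symm (π j)
  -- stage 1 : replace ctr a by a in the double sum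
  have stage1 : (∑ i, ∑ j, ctr N a i j * ctr N b (π i) (π j))
      = ∑ i, ∑ j, a i j * ctr N b (π i) (π j) := by
    have hsplit : ∀ i j, ctr N a i j * ctr N b (π i) (π j)
        = a i j * ctr N b (π i) (π j)
          - (rowSum N a i / N) * ctr N b (π i) (π j)
          - (rowSum N a j / N) * ctr N b (π i) (π j) := by
      intro i j
      unfold ctr
      ring
    rw [Finset.sum_congr rfl (fun i _ => Finset.sum_congr rfl (fun j _ => hsplit i j))]
    have t2 : ∀ i : Fin N, ∑ j, (rowSum N a i / N) * ctr N b (π i) (π j) = 0 := by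
      intro i
      rw [← Finset.mul_sum, hrowb i, mul_zero]
    have t3 : ∑ i, ∑ j, (rowSum N a j / N) * ctr N b (π i) (π j) = 0 := by
      rw [Finset.sum_comm]
      apply Finset.sum_eq_zero
      intro j _
      rw [← Finset.mul_sum, hcolb j, mul_zero]
    have expand : ∀ i : Fin N, ∑ j, (a i j * ctr N b (π i) (π j)
          - (rowSum N a i / N) * ctr N b (π i) (π j)
          - (rowSum N a j / N) * ctr N b (π i) (π j))
        = (∑ j, a i j * ctr N b (π i) (π j))
          - (∑ j, (rowSum N a i / N) * ctr N b (π i) (π j))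
          - (∑ j, (rowSum N a j / N) * ctr N b (π i) (π j)) := by
      intro i
      rw [Finset.sum_sub_distrib, Finset.sum_sub_distrib]
    rw [Finset.sum_congr rfl (fun i _ => expand i)]
    rw [Finset.sum_sub_distrib, Finset.sum_sub_distrib]
    rw [Finset.sum_congr rfl (fun i (_ : i ∈ univ) => t2 i), t3, Finset.sum_const_zero]
    ring
  -- stage 2 : expand ctr b
  have stage2 : (∑ i, ∑ j, a i j * ctr N b (π i) (π j))
      = gammaStat N a b π - 2 / N * ∑ i, rowSum N a i * rowSum N b (π i) := by
    have hsplit : ∀ i j, a i j * ctr N b (π i) (π j)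
        = a i j * b (π i) (π j)
          - a i j * (rowSum N b (π i) / N)
          - a i j * (rowSum N b (π j) / N) := by
      intro i j
      unfold ctr
      ring
    rw [Finset.sum_congr rfl (fun i _ => Finset.sum_congr rfl (fun j _ => hsplit i j))]
    have expand : ∀ i : Fin N, ∑ j, (a i j * b (π i) (π j)
          - a i j * (rowSum N b (π i) / N) - a i j * (rowSum N b (π j) / N))
        = (∑ j, a i j * b (π i) (π j))
          - (∑ j, a i j * (rowSum N b (π i) / N))
          - (∑ j, a i j * (rowSum N b (π j) / N)) := by
      intro i
      rw [Finset.sum_sub_distrib, Finset.sum_sub_distrib]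
    rw [Finset.sum_congr rfl (fun i _ => expand i)]
    rw [Finset.sum_sub_distrib, Finset.sum_sub_distrib]
    have t2 : ∑ i, ∑ j, a i j * (rowSum N b (π i) / N)
        = (1 / N) * ∑ i, rowSum N a i * rowSum N b (π i) := by
      rw [Finset.mul_sum]
      apply Finset.sum_congr rfl
      intro i _
      rw [← Finset.sum_mul]
      show rowSum N a i * (rowSum N b (π i) / N) = 1 / (N:ℝ) * (rowSum N a i * rowSum N b (π i))
      ring
    have t3 : ∑ i, ∑ j, a i j * (rowSum N b (π j) / N)
        = (1 / N) * ∑ i, rowSum N a i * rowSum N b (π i) := by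
      rw [Finset.sum_comm, Finset.mul_sum]
      apply Finset.sum_congr rfl
      intro j _
      rw [← Finset.sum_mul, colSum_eq a ha_symm j]
      show rowSum N a j * (rowSum N b (π j) / N) = 1 / (N:ℝ) * (rowSum N a j * rowSum N b (π j))
      ring
    rw [t2, t3, gammaStat]
    ring
  rw [stage1, stage2]
  have : ∑ i, (2 / (N:ℝ) * rowSum N a i) * rowSum N b (π i)
      = 2 / N * ∑ i, rowSum N a i * rowSum N b (π i) := by
    rw [Finset.mul_sum]
    apply Finset.sum_congr rfl
    intro i _
    ring
  rw [this]
  ring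

lemma wa_sum_zero {N : ℕ} (a : Fin N → Fin N → ℝ) (ha : ∑ i, ∑ j, a i j = 0) :
    ∑ i, (2 / (N:ℝ) * rowSum N a i) = 0 := by
  rw [← Finset.mul_sum, rowSum_total a ha, mul_zero]

lemma abs_wa_le {N : ℕ} (hN : 1 ≤ N) (a : Fin N → Fin N → ℝ) (i : Fin N) :
    |2 / (N:ℝ) * rowSum N a i| ≤ 2 * arrMax N a := by
  have hNpos : (0:ℝ) < N := by exact_mod_cast hN
  rw [abs_mul, abs_div, abs_of_pos hNpos]
  rw [show |(2:ℝ)| = 2 by norm_num]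
  rw [div_mul_eq_mul_div, div_le_iff₀ hNpos]
  calc 2 * |rowSum N a i| ≤ 2 * (N * arrMax N a) := by
        have := abs_rowSum_le a i
        linarith
    _ = 2 * arrMax N a * N := by ring

end Decomp


section Assembly

variable {N : ℕ}

/-- slot type for `j` quadratic factors and `kj` linear factors -/
abbrev Sl (j kj : ℕ) := (Fin j × Bool) ⊕ Fin kj

def epat (j kj ρ : ℕ) (p : Sl j kj → Fin ρ) : Multiset (Fin ρ × Fin ρ) :=
  Multiset.map (fun t : Fin j => (p (Sum.inl (t, false)), p (Sum.inl (t, true)))) univ.val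

def mpat (j kj ρ : ℕ) (p : Sl j kj → Fin ρ) : Multiset (Fin ρ) :=
  Multiset.map (fun t : Fin kj => p (Sum.inr t)) univ.val

@[simp] lemma card_epat (j kj ρ : ℕ) (p : Sl j kj → Fin ρ) :
    Multiset.card (epat j kj ρ p) = j := by
  rw [epat, Multiset.card_map]
  exact Finset.card_univ.trans (Fintype.card_fin j)

@[simp] lemma card_mpat (j kj ρ : ℕ) (p : Sl j kj → Fin ρ) :
    Multiset.card (mpat j kj ρ p) = kj := by
  rw [mpat, Multiset.card_map]
  exact Finset.card_univ.trans (Fintype.card_fin kj)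

lemma isoCount_surj_zero {j kj ρ : ℕ} (p : Sl j kj → Fin ρ) (hp : Surjective p) :
    isoCount (epat j kj ρ p) (mpat j kj ρ p) = 0 := by
  rw [isoCount, Finset.card_eq_zero, Finset.filter_eq_empty_iff]
  intro x _
  intro hocc
  obtain ⟨z, hz⟩ := hp x
  unfold occ at hocc
  rcases z with ⟨t, bb⟩ | t
  · have hmem : (p (Sum.inl (t, false)), p (Sum.inl (t, true))) ∈ epat j kj ρ p :=
      Multiset.mem_map_of_mem _ (Finset.mem_val.mpr (Finset.mem_univ t))
    have hge : 1 ≤ ((if (p (Sum.inl (t, false)), p (Sum.inl (t, true))).1 = x then 1 else 0)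
        + (if (p (Sum.inl (t, false)), p (Sum.inl (t, true))).2 = x then (1:ℕ) else 0)) := by
      cases bb
      · rw [if_pos hz]
        omega
      · rw [if_pos hz]
        omega
    have hsum : 1 ≤ ((epat j kj ρ p).map fun e =>
        (if e.1 = x then 1 else 0) + (if e.2 = x then (1:ℕ) else 0)).sum := by
      refine le_trans hge (Multiset.single_le_sum (fun y _ => Nat.zero_le y) _ ?_)
      exact Multiset.mem_map_of_mem _ hmem
    omega
  · have hmem : p (Sum.inr t) ∈ mpat j kj ρ p :=
      Multiset.mem_map_of_mem _ (Finset.mem_val.mpr (Finset.mem_univ t))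
    have hsum : 1 ≤ ((mpat j kj ρ p).map fun y => if y = x then (1:ℕ) else 0).sum := by
      refine le_trans ?_ (Multiset.single_le_sum (fun y _ => Nat.zero_le y) _
        (Multiset.mem_map_of_mem _ hmem))
      rw [if_pos hz]
    omega

noncomputable def TAfun (N j kj : ℕ) (a : Fin N → Fin N → ℝ) (T : Sl j kj → Fin N) : ℝ :=
  (∏ t : Fin j, ctr N a (T (Sum.inl (t, false))) (T (Sum.inl (t, true))))
    * ∏ t : Fin kj, (2 / (N:ℝ) * rowSum N a (T (Sum.inr t)))

noncomputable def TBfun (N j kj : ℕ) (b : Fin N → Fin N → ℝ) (T : Sl j kj → Fin N) : ℝ :=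
  (∏ t : Fin j, ctr N b (T (Sum.inl (t, false))) (T (Sum.inl (t, true))))
    * ∏ t : Fin kj, rowSum N b (T (Sum.inr t))

lemma TA_eq_patWeight (j kj ρ : ℕ) (p : Sl j kj → Fin ρ) (a : Fin N → Fin N → ℝ)
    (v : Fin ρ → Fin N) :
    TAfun N j kj a (v ∘ p)
      = patWeight N (ctr N a) (fun i => 2 / (N:ℝ) * rowSum N a i)
          (epat j kj ρ p) (mpat j kj ρ p) v := by
  rw [TAfun, patWeight, epat, mpat, Multiset.map_map, Multiset.map_map]
  rfl

lemma TB_eq_patWeight (j kj ρ : ℕ) (p : Sl j kj → Fin ρ) (b : Fin N → Fin N → ℝ)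
    (v : Fin ρ → Fin N) :
    TBfun N j kj b (v ∘ p)
      = patWeight N (ctr N b) (rowSum N b) (epat j kj ρ p) (mpat j kj ρ p) v := by
  rw [TBfun, patWeight, epat, mpat, Multiset.map_map, Multiset.map_map]
  rfl

def slotEquiv (N j kj : ℕ) :
    ((Fin j → Fin N × Fin N) × (Fin kj → Fin N)) ≃ (Sl j kj → Fin N) where
  toFun gh := Sum.elim (fun tb => if tb.2 then (gh.1 tb.1).2 else (gh.1 tb.1).1) gh.2
  invFun T := (fun t => (T (Sum.inl (t, false)), T (Sum.inl (t, true))), fun t => T (Sum.inr t))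
  left_inv := by
    rintro ⟨g, h⟩
    refine Prod.ext ?_ ?_
    · funext t
      simp
    · funext t
      simp
  right_inv := by
    intro T
    funext z
    rcases z with ⟨t, bb⟩ | t
    · cases bb <;> simp
    · simp

lemma pow_mul_expand (j kj : ℕ) (a b : Fin N → Fin N → ℝ) (π : Equiv.Perm (Fin N)) :
    (∑ i, ∑ l, ctr N a i l * ctr N b (π i) (π l)) ^ j
        * (∑ i, (2 / (N:ℝ) * rowSum N a i) * rowSum N b (π i)) ^ kj
      = ∑ T : Sl j kj → Fin N, TAfun N j kj a T * TBfun N j kj b (⇑π ∘ T) := by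
  have hX : (∑ i, ∑ l, ctr N a i l * ctr N b (π i) (π l))
      = ∑ z : Fin N × Fin N, ctr N a z.1 z.2 * ctr N b (π z.1) (π z.2) := by
    rw [Fintype.sum_prod_type]
  have hXj : (∑ i, ∑ l, ctr N a i l * ctr N b (π i) (π l)) ^ j
      = ∑ g : Fin j → Fin N × Fin N,
          ∏ t, ctr N a (g t).1 (g t).2 * ctr N b (π (g t).1) (π (g t).2) := by
    rw [hX]
    rw [show (∑ z : Fin N × Fin N, ctr N a z.1 z.2 * ctr N b (π z.1) (π z.2)) ^ j
      = ∏ _t : Fin j, ∑ z : Fin N × Fin N, ctr N a z.1 z.2 * ctr N b (π z.1) (π z.2) by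
        rw [Finset.prod_const, Finset.card_univ, Fintype.card_fin]]
    rw [Finset.prod_univ_sum]
    apply Finset.sum_congr
    · simp
    · intro g _
      rfl
  have hYk : (∑ i, (2 / (N:ℝ) * rowSum N a i) * rowSum N b (π i)) ^ kj
      = ∑ h : Fin kj → Fin N,
          ∏ t, (2 / (N:ℝ) * rowSum N a (h t)) * rowSum N b (π (h t)) := by
    rw [show (∑ i, (2 / (N:ℝ) * rowSum N a i) * rowSum N b (π i)) ^ kj
      = ∏ _t : Fin kj, ∑ i, (2 / (N:ℝ) * rowSum N a i) * rowSum N b (π i) by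
        rw [Finset.prod_const, Finset.card_univ, Fintype.card_fin]]
    rw [Finset.prod_univ_sum]
    apply Finset.sum_congr
    · simp
    · intro g _
      rfl
  rw [hXj, hYk, Finset.sum_mul_sum]
  rw [← Equiv.sum_comp (slotEquiv N j kj)
    (fun T => TAfun N j kj a T * TBfun N j kj b (⇑π ∘ T))]
  rw [Fintype.sum_prod_type]
  apply Finset.sum_congr rfl
  intro g _
  apply Finset.sum_congr rfl
  intro h _
  have hTA : TAfun N j kj a (slotEquiv N j kj (g, h))
      = (∏ t, ctr N a (g t).1 (g t).2) * ∏ t, (2 / (N:ℝ) * rowSum N a (h t)) := by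
    rw [TAfun]
    rfl
  have hTB : TBfun N j kj b (⇑π ∘ slotEquiv N j kj (g, h))
      = (∏ t, ctr N b (π (g t).1) (π (g t).2)) * ∏ t, rowSum N b (π (h t)) := by
    rw [TBfun]
    rfl
  rw [hTA, hTB, Finset.prod_mul_distrib, Finset.prod_mul_distrib]
  ring

end Assembly


section MomentJ

lemma moment_j (N : ℕ) (a b : Fin N → Fin N → ℝ) (j kj : ℕ) :
    (∑ π : Equiv.Perm (Fin N), (∑ i, ∑ l, ctr N a i l * ctr N b (π i) (π l)) ^ j
        * (∑ i, (2 / (N:ℝ) * rowSum N a i) * rowSum N b (π i)) ^ kj) / (N.factorial : ℝ)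
      = ∑ ρ ∈ Finset.range (Fintype.card (Sl j kj) + 1), ((ρ.factorial : ℝ))⁻¹ *
          ∑ p : Sl j kj → Fin ρ, (if Surjective p then
            ((N - ρ).factorial : ℝ) / (N.factorial : ℝ)
              * injSum (Fin ρ) N (ctr N a) (fun i => 2/(N:ℝ) * rowSum N a i)
                  (epat j kj ρ p) (mpat j kj ρ p)
              * injSum (Fin ρ) N (ctr N b) (rowSum N b) (epat j kj ρ p) (mpat j kj ρ p)
            else 0) := by
  classical
  have step1 : (∑ π : Equiv.Perm (Fin N), (∑ i, ∑ l, ctr N a i l * ctr N b (π i) (π l)) ^ j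
        * (∑ i, (2 / (N:ℝ) * rowSum N a i) * rowSum N b (π i)) ^ kj) / (N.factorial : ℝ)
      = ∑ T : Sl j kj → Fin N,
          TAfun N j kj a T * ((∑ π : Equiv.Perm (Fin N), TBfun N j kj b (⇑π ∘ T))
            / (N.factorial : ℝ)) := by
    rw [Finset.sum_congr rfl (fun π _ => pow_mul_expand j kj a b π)]
    rw [Finset.sum_comm, Finset.sum_div]
    apply Finset.sum_congr rfl
    intro T _
    rw [← Finset.mul_sum, mul_div_assoc]
  rw [step1]
  rw [group_sum N (fun T => TAfun N j kj a T
    * ((∑ π : Equiv.Perm (Fin N), TBfun N j kj b (⇑π ∘ T)) / (N.factorial : ℝ)))]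
  apply Finset.sum_congr rfl
  intro ρ _
  congr 1
  apply Finset.sum_congr rfl
  intro p _
  by_cases hp : Surjective p
  · rw [if_pos hp, if_pos hp]
    have hv2 : ∀ v : Fin ρ → Fin N, Injective v →
        (∑ π : Equiv.Perm (Fin N), TBfun N j kj b (⇑π ∘ (v ∘ p)))
        = ((N - ρ).factorial : ℝ)
            * injSum (Fin ρ) N (ctr N b) (rowSum N b) (epat j kj ρ p) (mpat j kj ρ p) := by
      intro v hv
      have h1 : ∀ π : Equiv.Perm (Fin N), TBfun N j kj b (⇑π ∘ (v ∘ p))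
          = (fun g : Fin ρ → Fin N => TBfun N j kj b (g ∘ p)) (⇑π ∘ v) := by
        intro π
        rfl
      rw [Finset.sum_congr rfl (fun π _ => h1 π)]
      rw [sum_perm_comp v hv (fun g => TBfun N j kj b (g ∘ p))]
      congr 1
      rw [injSum]
      apply Finset.sum_congr rfl
      intro g _
      by_cases hg : Injective g
      · rw [if_pos hg, if_pos hg, TB_eq_patWeight]
      · rw [if_neg hg, if_neg hg]
    have hper : ∀ v : Fin ρ → Fin N,
        (if Injective v then TAfun N j kj a (v ∘ p)
          * ((∑ π : Equiv.Perm (Fin N), TBfun N j kj b (⇑π ∘ (v ∘ p)))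
            / (N.factorial : ℝ)) else 0)
        = (if Injective v then patWeight N (ctr N a) (fun i => 2/(N:ℝ) * rowSum N a i)
              (epat j kj ρ p) (mpat j kj ρ p) v else 0)
            * (((N - ρ).factorial : ℝ)
              * injSum (Fin ρ) N (ctr N b) (rowSum N b) (epat j kj ρ p) (mpat j kj ρ p)
              / (N.factorial : ℝ)) := by
      intro v
      by_cases hv : Injective v
      · rw [if_pos hv, if_pos hv, hv2 v hv, TA_eq_patWeight]
      · rw [if_neg hv, if_neg hv, zero_mul]
    rw [Finset.sum_congr rfl (fun v _ => hper v), ← Finset.sum_mul]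
    rw [← injSum]
    ring
  · rw [if_neg hp, if_neg hp]

end MomentJ


section Numeric

lemma desc_ratio_le {N ρ : ℕ} (hN1 : 1 ≤ N) (hρN : 2 * ρ ≤ N) :
    ((N - ρ).factorial : ℝ) / (N.factorial : ℝ) ≤ 2^ρ / (N:ℝ)^ρ := by
  have hρ : ρ ≤ N := by omega
  have hn0 : (0:ℝ) < (N:ℝ) := by exact_mod_cast hN1
  have hfact : ((N - ρ).factorial : ℝ) * (N.descFactorial ρ : ℝ) = (N.factorial : ℝ) := by
    exact_mod_cast congrArg (Nat.cast (R := ℝ)) (Nat.factorial_mul_descFactorial hρ)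
  have hdesc : ((N:ℝ)/2)^ρ ≤ (N.descFactorial ρ : ℝ) := by
    have h1 : (N + 1 - ρ)^ρ ≤ N.descFactorial ρ := Nat.pow_sub_le_descFactorial N ρ
    have h2 : (N:ℝ)/2 ≤ ((N + 1 - ρ : ℕ) : ℝ) := by
      rw [div_le_iff₀ (by norm_num : (0:ℝ) < 2)]
      have h3 : N ≤ (N + 1 - ρ) * 2 := by omega
      exact_mod_cast h3
    calc ((N:ℝ)/2)^ρ ≤ (((N + 1 - ρ : ℕ)):ℝ)^ρ := by
          apply pow_le_pow_left₀ (by positivity) h2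
      _ ≤ (N.descFactorial ρ : ℝ) := by exact_mod_cast h1
  have hfp : (0:ℝ) < (N.factorial : ℝ) := by exact_mod_cast N.factorial_pos
  have hpp : (0:ℝ) < (N:ℝ)^ρ := by positivity
  rw [div_le_div_iff₀ hfp hpp]
  calc ((N - ρ).factorial : ℝ) * (N:ℝ)^ρ
      = ((N - ρ).factorial : ℝ) * ((2:ℝ)^ρ * ((N:ℝ)/2)^ρ) := by
        rw [← mul_pow]
        congr 2
        field_simp
    _ ≤ ((N - ρ).factorial : ℝ) * ((2:ℝ)^ρ * (N.descFactorial ρ : ℝ)) := by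
        have h0 : (0:ℝ) ≤ ((N - ρ).factorial : ℝ) := by positivity
        have h2 : (0:ℝ) ≤ (2:ℝ)^ρ := by positivity
        apply mul_le_mul_of_nonneg_left _ h0
        exact mul_le_mul_of_nonneg_left hdesc h2
    _ = 2^ρ * (((N - ρ).factorial : ℝ) * (N.descFactorial ρ : ℝ)) := by ring
    _ = 2^ρ * (N.factorial : ℝ) := by rw [hfact]

lemma final_term_bound (m k : ℕ) (hk : k = 2*m + 1) (j ρ e : ℕ) (hj : j ≤ k)
    (he : e ≤ ρ) (hinv : 2 * e ≤ 2 * j + (k - j)) (C : ℝ) (hC : 0 ≤ C)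
    (N : ℕ) (hN : 2 * ρ ≤ N) (hN1 : 1 ≤ N) (α β : ℝ) (hα : 0 ≤ α) (hβ : 0 ≤ β)
    (X Y : ℝ)
    (hX : |X| ≤ C * (N:ℝ)^e * (3*α)^j * (2*α)^(k-j))
    (hY : |Y| ≤ C * (N:ℝ)^e * (3*β)^j * ((N:ℝ)*β)^(k-j)) :
    ((N - ρ).factorial : ℝ) / (N.factorial : ℝ) * |X| * |Y|
      ≤ C^2 * 9^k * 2^k * 2^ρ * ((N:ℝ)^(3*m+1) * α^k * β^k) := by
  have hn1 : (1:ℝ) ≤ (N:ℝ) := by exact_mod_cast hN1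
  have hn0 : (0:ℝ) < (N:ℝ) := by linarith
  have hsplit : j + (k - j) = k := by omega
  have hX' : |X| ≤ C * 3^j * 2^(k-j) * α^k * (N:ℝ)^e := by
    calc |X| ≤ C * (N:ℝ)^e * (3*α)^j * (2*α)^(k-j) := hX
      _ = C * 3^j * 2^(k-j) * (α^j * α^(k-j)) * (N:ℝ)^e := by
          rw [mul_pow, mul_pow]
          ring
      _ = C * 3^j * 2^(k-j) * α^k * (N:ℝ)^e := by
          rw [← pow_add, hsplit]
  have hY' : |Y| ≤ C * 3^j * β^k * (N:ℝ)^(e + (k-j)) := by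
    calc |Y| ≤ C * (N:ℝ)^e * (3*β)^j * ((N:ℝ)*β)^(k-j) := hY
      _ = C * 3^j * (β^j * β^(k-j)) * ((N:ℝ)^e * (N:ℝ)^(k-j)) := by
          rw [mul_pow, mul_pow]
          ring
      _ = C * 3^j * β^k * (N:ℝ)^(e + (k-j)) := by
          rw [← pow_add, hsplit, ← pow_add]
  have hXY : |X| * |Y| ≤ (C * 3^j * 2^(k-j) * α^k * (N:ℝ)^e)
      * (C * 3^j * β^k * (N:ℝ)^(e + (k-j))) := by
    apply mul_le_mul hX' hY' (abs_nonneg _) (by positivity)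
  have hratio : ((N - ρ).factorial : ℝ) / (N.factorial : ℝ) ≤ 2^ρ / (N:ℝ)^ρ :=
    desc_ratio_le hN1 hN
  have hrnn : (0:ℝ) ≤ ((N - ρ).factorial : ℝ) / (N.factorial : ℝ) := by positivity
  calc ((N - ρ).factorial : ℝ) / (N.factorial : ℝ) * |X| * |Y|
      = ((N - ρ).factorial : ℝ) / (N.factorial : ℝ) * (|X| * |Y|) := by ring
    _ ≤ (2^ρ / (N:ℝ)^ρ) * ((C * 3^j * 2^(k-j) * α^k * (N:ℝ)^e)
          * (C * 3^j * β^k * (N:ℝ)^(e + (k-j)))) := by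
        apply mul_le_mul hratio hXY (by positivity) (by positivity)
    _ = C^2 * (3^j * 3^j) * 2^(k-j) * 2^ρ * (α^k * β^k)
          * ((N:ℝ)^(2*e + (k-j)) / (N:ℝ)^ρ) := by
        rw [show (N:ℝ)^(2*e + (k-j)) = (N:ℝ)^e * (N:ℝ)^(e + (k-j)) by
          rw [← pow_add]; congr 1; omega]
        ring
    _ ≤ C^2 * (3^j * 3^j) * 2^(k-j) * 2^ρ * (α^k * β^k) * (N:ℝ)^(3*m+1) := by
        apply mul_le_mul_of_nonneg_left _ (by positivity)
        rw [div_le_iff₀ (by positivity)]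
        rw [← pow_add]
        apply pow_le_pow_right₀ hn1
        omega
    _ ≤ C^2 * 9^k * 2^k * 2^ρ * ((N:ℝ)^(3*m+1) * α^k * β^k) := by
        have h9 : (3:ℝ)^j * 3^j ≤ 9^k := by
          rw [← pow_add]
          calc (3:ℝ)^(j+j) ≤ 3^(k+k) :=
            pow_le_pow_right₀ (by norm_num) (by omega)
            _ = 9^k := by
              rw [show (9:ℝ) = 3^2 by norm_num, ← pow_mul]
              congr 1
              omega
        have h2 : (2:ℝ)^(k-j) ≤ 2^k := pow_le_pow_right₀ (by norm_num) (by omega)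
        have hge : (0:ℝ) ≤ C^2 * (3^j*3^j) * 2^(k-j) * 2^ρ * (α^k * β^k) * (N:ℝ)^(3*m+1) := by
          positivity
        calc C^2 * (3^j * 3^j) * 2^(k-j) * 2^ρ * (α^k * β^k) * (N:ℝ)^(3*m+1)
            ≤ C^2 * 9^k * 2^(k-j) * 2^ρ * (α^k * β^k) * (N:ℝ)^(3*m+1) := by
              have : (0:ℝ) ≤ C^2 * 2^(k-j) * 2^ρ * (α^k * β^k) * (N:ℝ)^(3*m+1) := by
                positivity
              nlinarith [h9, this]
          _ ≤ C^2 * 9^k * 2^k * 2^ρ * (α^k * β^k) * (N:ℝ)^(3*m+1) := by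
              have : (0:ℝ) ≤ C^2 * 9^k * 2^ρ * (α^k * β^k) * (N:ℝ)^(3*m+1) := by
                positivity
              nlinarith [h2, this]
          _ = C^2 * 9^k * 2^k * 2^ρ * ((N:ℝ)^(3*m+1) * α^k * β^k) := by ring

end Numeric


section Main

lemma card_Sl (j kj : ℕ) : Fintype.card (Sl j kj) = 2 * j + kj := by
  rw [Fintype.card_sum, Fintype.card_prod, Fintype.card_fin, Fintype.card_fin,
    Fintype.card_bool]
  ring

lemma moment_main (m : ℕ) (a b : (N : ℕ) → Fin N → Fin N → ℝ)
    (ha_symm : ∀ N, ∀ i j : Fin N, a N i j = a N j i)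
    (hb_symm : ∀ N, ∀ i j : Fin N, b N i j = b N j i)
    (ha_sum : ∀ N, ∑ i, ∑ j, a N i j = 0)
    (hb_sum : ∀ N, ∑ i, ∑ j, b N i j = 0) :
    ∃ C : ℝ, 0 ≤ C ∧ ∀ N : ℕ, 4 * (2*m+1) + 2 ≤ N →
      |permE N (fun π => gammaStat N (a N) (b N) π ^ (2*m+1))|
        ≤ C * ((N:ℝ)^(3*m+1) * arrMax N (a N)^(2*m+1) * arrMax N (b N)^(2*m+1)) := by
  classical
  set k := 2*m+1 with hkdef
  have hch : ∀ (j ρ : ℕ) (p : Sl j (k - j) → Fin ρ), ∃ (e : ℕ) (C : ℝ), 0 ≤ C ∧ e ≤ ρ ∧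
      2 * e ≤ 2 * Multiset.card (epat j (k-j) ρ p) + Multiset.card (mpat j (k-j) ρ p)
        + 2 * isoCount (epat j (k-j) ρ p) (mpat j (k-j) ρ p) ∧
      ∀ (N : ℕ), 1 ≤ N → ∀ (c : Fin N → Fin N → ℝ) (w : Fin N → ℝ) (α W : ℝ),
        0 ≤ α → 0 ≤ W → (∀ i j, |c i j| ≤ α) → (∀ i, |w i| ≤ W) →
        (∀ j, ∑ i, c i j = 0) → (∀ i, ∑ j, c i j = 0) → (∑ i, w i = 0) →
        |injSum (Fin ρ) N c w (epat j (k-j) ρ p) (mpat j (k-j) ρ p)|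
          ≤ C * (N:ℝ) ^ e * α ^ Multiset.card (epat j (k-j) ρ p)
              * W ^ Multiset.card (mpat j (k-j) ρ p) :=
    fun j ρ p => injSum_bound ρ (Fin ρ) (Fintype.card_fin ρ)
      (epat j (k-j) ρ p) (mpat j (k-j) ρ p)
  choose eP CP hC0 hle hinv hbd using hch
  refine ⟨∑ j ∈ Finset.range (k+1), (k.choose j : ℝ) *
      ∑ ρ ∈ Finset.range (Fintype.card (Sl j (k-j)) + 1),
        ∑ p : Sl j (k-j) → Fin ρ, ((CP j ρ p)^2 * 9^k * 2^k * 2^ρ), ?_, ?_⟩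
  · apply Finset.sum_nonneg
    intro j _
    apply mul_nonneg (by positivity)
    apply Finset.sum_nonneg
    intro ρ _
    apply Finset.sum_nonneg
    intro p _
    have := hC0 j ρ p
    positivity
  intro N hN
  have hN1 : 1 ≤ N := by omega
  set α := arrMax N (a N) with hα
  set β := arrMax N (b N) with hβ
  have hα0 : 0 ≤ α := arrMax_nonneg hN1 (a N)
  have hβ0 : 0 ≤ β := arrMax_nonneg hN1 (b N)
  set D : ℝ := (N:ℝ)^(3*m+1) * α^k * β^k with hD
  have hD0 : 0 ≤ D := by positivity
  -- binomial expansion of the moment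
  have hgam : ∀ π : Equiv.Perm (Fin N), gammaStat N (a N) (b N) π ^ k
      = ∑ j ∈ Finset.range (k+1),
          (∑ i, ∑ l, ctr N (a N) i l * ctr N (b N) (π i) (π l)) ^ j
            * (∑ i, (2 / (N:ℝ) * rowSum N (a N) i) * rowSum N (b N) (π i)) ^ (k - j)
            * (k.choose j : ℝ) := by
    intro π
    rw [gamma_decomp hN1 (a N) (b N) (ha_symm N) (hb_symm N) (ha_sum N) (hb_sum N) π]
    exact add_pow _ _ k
  have hexp : permE N (fun π => gammaStat N (a N) (b N) π ^ k)
      = ∑ j ∈ Finset.range (k+1), (k.choose j : ℝ) *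
          ((∑ π : Equiv.Perm (Fin N),
            (∑ i, ∑ l, ctr N (a N) i l * ctr N (b N) (π i) (π l)) ^ j
              * (∑ i, (2 / (N:ℝ) * rowSum N (a N) i) * rowSum N (b N) (π i)) ^ (k - j))
            / (N.factorial : ℝ)) := by
    rw [permE]
    rw [Finset.sum_congr rfl (fun π _ => hgam π)]
    rw [Finset.sum_comm, Finset.sum_div]
    apply Finset.sum_congr rfl
    intro j _
    rw [← Finset.sum_mul, mul_comm, mul_div_assoc]
  rw [hexp]
  -- per-j bound
  have hjb : ∀ j ∈ Finset.range (k+1),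
      |(k.choose j : ℝ) *
          ((∑ π : Equiv.Perm (Fin N),
            (∑ i, ∑ l, ctr N (a N) i l * ctr N (b N) (π i) (π l)) ^ j
              * (∑ i, (2 / (N:ℝ) * rowSum N (a N) i) * rowSum N (b N) (π i)) ^ (k - j))
            / (N.factorial : ℝ))|
        ≤ (k.choose j : ℝ) *
            (∑ ρ ∈ Finset.range (Fintype.card (Sl j (k-j)) + 1),
              ∑ p : Sl j (k-j) → Fin ρ, ((CP j ρ p)^2 * 9^k * 2^k * 2^ρ)) * D := by
    intro j hjmem
    have hj : j ≤ k := by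
      rw [Finset.mem_range] at hjmem
      omega
    rw [abs_mul, abs_of_nonneg (by positivity : (0:ℝ) ≤ (k.choose j : ℝ))]
    rw [mul_assoc]
    apply mul_le_mul_of_nonneg_left _ (by positivity)
    rw [moment_j N (a N) (b N) j (k - j)]
    -- bound the ρ-sum
    have hρstep : ∀ ρ ∈ Finset.range (Fintype.card (Sl j (k-j)) + 1),
        |((ρ.factorial : ℝ))⁻¹ *
          ∑ p : Sl j (k-j) → Fin ρ, (if Surjective p then
            ((N - ρ).factorial : ℝ) / (N.factorial : ℝ)
              * injSum (Fin ρ) N (ctr N (a N)) (fun i => 2/(N:ℝ) * rowSum N (a N) i)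
                  (epat j (k-j) ρ p) (mpat j (k-j) ρ p)
              * injSum (Fin ρ) N (ctr N (b N)) (rowSum N (b N))
                  (epat j (k-j) ρ p) (mpat j (k-j) ρ p)
            else 0)|
          ≤ ∑ p : Sl j (k-j) → Fin ρ, ((CP j ρ p)^2 * 9^k * 2^k * 2^ρ) * D := by
      intro ρ hρmem
      have hρ : ρ ≤ 2 * j + (k - j) := by
        rw [Finset.mem_range, card_Sl] at hρmem
        omega
      have h2ρN : 2 * ρ ≤ N := by omega
      have habs : |∑ p : Sl j (k-j) → Fin ρ, (if Surjective p then
            ((N - ρ).factorial : ℝ) / (N.factorial : ℝ)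
              * injSum (Fin ρ) N (ctr N (a N)) (fun i => 2/(N:ℝ) * rowSum N (a N) i)
                  (epat j (k-j) ρ p) (mpat j (k-j) ρ p)
              * injSum (Fin ρ) N (ctr N (b N)) (rowSum N (b N))
                  (epat j (k-j) ρ p) (mpat j (k-j) ρ p)
            else 0)|
          ≤ ∑ p : Sl j (k-j) → Fin ρ, ((CP j ρ p)^2 * 9^k * 2^k * 2^ρ) * D := by
        refine le_trans (Finset.abs_sum_le_sum_abs _ _) ?_
        apply Finset.sum_le_sum
        intro p _
        by_cases hp : Surjective p
        · rw [if_pos hp]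
          have hXraw := hbd j ρ p N hN1 (ctr N (a N))
            (fun i => 2/(N:ℝ) * rowSum N (a N) i) (3*α) (2*α)
            (by positivity) (by positivity)
            (fun i l => abs_ctr_le hN1 (a N) i l)
            (fun i => abs_wa_le hN1 (a N) i)
            (ctr_col_zero hN1 (a N) (ha_symm N) (ha_sum N))
            (ctr_row_zero hN1 (a N) (ha_sum N))
            (wa_sum_zero (a N) (ha_sum N))
          have hYraw := hbd j ρ p N hN1 (ctr N (b N)) (rowSum N (b N))
            (3*β) ((N:ℝ)*β)
            (by positivity) (by positivity)
            (fun i l => abs_ctr_le hN1 (b N) i l)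
            (fun i => abs_rowSum_le (b N) i)
            (ctr_col_zero hN1 (b N) (hb_symm N) (hb_sum N))
            (ctr_row_zero hN1 (b N) (hb_sum N))
            (rowSum_total (b N) (hb_sum N))
          rw [card_epat, card_mpat] at hXraw hYraw
          have hinv' : 2 * eP j ρ p ≤ 2 * j + (k - j) := by
            have := hinv j ρ p
            rw [card_epat, card_mpat, isoCount_surj_zero p hp] at this
            omega
          have hkey := final_term_bound m k hkdef j ρ (eP j ρ p) hj (hle j ρ p)
            hinv' (CP j ρ p) (hC0 j ρ p) N h2ρN hN1 α β hα0 hβ0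
            (injSum (Fin ρ) N (ctr N (a N)) (fun i => 2/(N:ℝ) * rowSum N (a N) i)
              (epat j (k-j) ρ p) (mpat j (k-j) ρ p))
            (injSum (Fin ρ) N (ctr N (b N)) (rowSum N (b N))
              (epat j (k-j) ρ p) (mpat j (k-j) ρ p)) hXraw hYraw
          have heq : |((N - ρ).factorial : ℝ) / (N.factorial : ℝ)
                * injSum (Fin ρ) N (ctr N (a N))
                    (fun i => 2/(N:ℝ) * rowSum N (a N) i)
                    (epat j (k-j) ρ p) (mpat j (k-j) ρ p)
                * injSum (Fin ρ) N (ctr N (b N)) (rowSum N (b N))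
                    (epat j (k-j) ρ p) (mpat j (k-j) ρ p)|
              = ((N - ρ).factorial : ℝ) / (N.factorial : ℝ)
                  * |injSum (Fin ρ) N (ctr N (a N))
                      (fun i => 2/(N:ℝ) * rowSum N (a N) i)
                      (epat j (k-j) ρ p) (mpat j (k-j) ρ p)|
                  * |injSum (Fin ρ) N (ctr N (b N)) (rowSum N (b N))
                      (epat j (k-j) ρ p) (mpat j (k-j) ρ p)| := by
            rw [abs_mul, abs_mul, abs_of_nonneg (by positivity :
              (0:ℝ) ≤ ((N - ρ).factorial : ℝ) / (N.factorial : ℝ))]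
          rw [heq]
          refine le_trans hkey (le_of_eq ?_)
          rw [hD]
        · rw [if_neg hp, abs_zero]
          have := hC0 j ρ p
          positivity
      have hinv_le_one : ((ρ.factorial : ℝ))⁻¹ ≤ 1 := by
        rw [inv_le_one_iff₀]
        right
        exact_mod_cast ρ.factorial_pos
      rw [abs_mul, abs_of_nonneg (by positivity : (0:ℝ) ≤ ((ρ.factorial : ℝ))⁻¹)]
      refine le_trans (mul_le_mul_of_nonneg_right hinv_le_one (abs_nonneg _)) ?_
      rw [one_mul]
      exact habs
    refine le_trans (Finset.abs_sum_le_sum_abs _ _)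
      (le_trans (Finset.sum_le_sum hρstep) (le_of_eq ?_))
    rw [Finset.sum_mul]
    apply Finset.sum_congr rfl
    intro ρ _
    rw [Finset.sum_mul]
  -- sum the per-j bounds
  calc |∑ j ∈ Finset.range (k+1), (k.choose j : ℝ) *
        ((∑ π : Equiv.Perm (Fin N),
          (∑ i, ∑ l, ctr N (a N) i l * ctr N (b N) (π i) (π l)) ^ j
            * (∑ i, (2 / (N:ℝ) * rowSum N (a N) i) * rowSum N (b N) (π i)) ^ (k - j))
          / (N.factorial : ℝ))|
      ≤ ∑ j ∈ Finset.range (k+1), (k.choose j : ℝ) *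
            (∑ ρ ∈ Finset.range (Fintype.card (Sl j (k-j)) + 1),
              ∑ p : Sl j (k-j) → Fin ρ, ((CP j ρ p)^2 * 9^k * 2^k * 2^ρ)) * D :=
        le_trans (Finset.abs_sum_le_sum_abs _ _) (Finset.sum_le_sum hjb)
    _ = (∑ j ∈ Finset.range (k+1), (k.choose j : ℝ) *
          ∑ ρ ∈ Finset.range (Fintype.card (Sl j (k-j)) + 1),
            ∑ p : Sl j (k-j) → Fin ρ, ((CP j ρ p)^2 * 9^k * 2^k * 2^ρ)) * D := by
        rw [Finset.sum_mul]
    _ = _ := by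
        rw [hD]

end Main

end OddMoment












/-- **Odd moment order bound.** -/
theorem odd_moment_bigO
    (a b : (N : ℕ) → Fin N → Fin N → ℝ)
    (ha_symm : ∀ N, ∀ i j : Fin N, a N i j = a N j i)
    (hb_symm : ∀ N, ∀ i j : Fin N, b N i j = b N j i)
    (ha_sum : ∀ N, ∑ i, ∑ j, a N i j = 0)
    (hb_sum : ∀ N, ∑ i, ∑ j, b N i j = 0)
    (hA : AsympEquiv (fun N => ∑ i, ∑ j, ∑ k, a N i j * a N i k)
      (fun N => (N : ℝ) ^ 3 * (arrMax N (a N)) ^ 2))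
    (hB : AsympEquiv (fun N => ∑ i, ∑ j, ∑ k, b N i j * b N i k)
      (fun N => (N : ℝ) ^ 3 * (arrMax N (b N)) ^ 2))
    :
    ∀ m : ℕ,
      (fun N : ℕ => |permE N (fun π => (gammaStat N (a N) (b N) π) ^ (2 * m + 1))|)
        =O[atTop] (fun N => (N : ℝ) ^ (3 * m + 1)
          * (arrMax N (a N)) ^ (2 * m + 1) * (arrMax N (b N)) ^ (2 * m + 1)) := by
  intro m
  obtain ⟨C, hC0, hC⟩ := OddMoment.moment_main m a b ha_symm hb_symm ha_sum hb_sum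
  rw [Asymptotics.isBigO_iff]
  refine ⟨C, ?_⟩
  filter_upwards [Filter.eventually_ge_atTop (4*(2*m+1)+2)] with N hN
  have hN1 : 1 ≤ N := by omega
  have hb := hC N hN
  have hα0 : 0 ≤ arrMax N (a N) := OddMoment.arrMax_nonneg hN1 (a N)
  have hβ0 : 0 ≤ arrMax N (b N) := OddMoment.arrMax_nonneg hN1 (b N)
  rw [Real.norm_eq_abs, Real.norm_eq_abs, abs_abs]
  refine le_trans hb (le_of_eq ?_)
  rw [abs_of_nonneg (by positivity)]
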